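/- arXiv:0707.0340 — 7 statements merged into one kernel-verified Lean document; each statement's English description precedes it below -/
import Mathlib

section
/- Let k be a positive integer and let q and n be positive real numbers with n ≥ k·q. Then n·(n−q)·(n−2q)···(n−(k−1)q) ≥ (n/e)^k. -/
/-- Let `k` be a positive integer and `q`, `n` positive reals with `n ≥ k·q`.
Then `n·(n−q)·(n−2q)⋯(n−(k−1)q) ≥ (n/e)^k`. -/
theorem stmt_0 (k : ℕ) (hk : 0 < k) (q n : ℝ) (hq : 0 < q) (hn : 0 < n)
    (h : (k : ℝ) * q ≤ n) :
    (n / Real.exp 1) ^ k ≤ ∏ i ∈ Finset.range k, (n - (i : ℝ) * q) := by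
  have hk0 : (0:ℝ) < k := Nat.cast_pos.mpr hk
  have hq' : q ≤ n / k := (le_div_iff₀ hk0).mpr (by linarith [mul_comm (k:ℝ) q])
  have step1 : ∏ i ∈ Finset.range k, (n / k * ((k:ℝ) - i)) ≤
      ∏ i ∈ Finset.range k, (n - (i : ℝ) * q) := by
    apply Finset.prod_le_prod
    · intro i hi
      have hik : (i:ℝ) < k := by exact_mod_cast Finset.mem_range.mp hi
      have : (0:ℝ) ≤ (k:ℝ) - i := by linarith
      positivity
    · intro i hi
      have hi0 : (0:ℝ) ≤ i := Nat.cast_nonneg i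
      have heq : n / k * ((k:ℝ) - i) = n - i * (n / k) := by
        field_simp
      rw [heq]
      nlinarith
  have step0 : ∏ i ∈ Finset.range k, (n / k * ((k:ℝ) - i)) = (n / k) ^ k * (k.factorial : ℝ) := by
    rw [Finset.prod_mul_distrib, Finset.prod_const, Finset.card_range]
    congr 1
    rw [← Finset.prod_range_reflect]
    have : ∀ i ∈ Finset.range k, (k:ℝ) - (k - 1 - i : ℕ) = (i + 1 : ℕ) := by
      intro i hi
      have hik := Finset.mem_range.mp hi
      have h1 : ((k - 1 - i : ℕ) : ℝ) = (k:ℝ) - (i + 1) := by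
        have he : k - 1 - i = k - (i + 1) := by omega
        rw [he, Nat.cast_sub (by omega)]
        push_cast; ring
      rw [h1]; push_cast; ring
    rw [Finset.prod_congr rfl this]
    norm_cast
    exact Finset.prod_range_add_one_eq_factorial k
  have key : (k:ℝ) ^ k ≤ ((k.factorial : ℝ) : ℝ) * Real.exp 1 ^ k := by
    have := Real.pow_div_factorial_le_exp (x := (k:ℝ)) hk0.le k
    rw [Real.exp_one_pow]
    have hf : (0:ℝ) < ((k.factorial : ℝ) : ℝ) := by positivity
    rw [div_le_iff₀ hf] at this
    linarith [this]
  calc (n / Real.exp 1) ^ k = n ^ k / Real.exp 1 ^ k := div_pow n _ k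
    _ ≤ (n / k) ^ k * (k.factorial : ℝ) := by
        rw [div_pow, div_mul_eq_mul_div, div_le_div_iff₀ (by positivity) (by positivity)]
        nlinarith [mul_le_mul_of_nonneg_left key (pow_nonneg hn.le k)]
    _ = ∏ i ∈ Finset.range k, (n / k * ((k:ℝ) - i)) := step0.symm
    _ ≤ _ := step1
end

section
/- Let Q be an m×n nonnegative integer matrix with row sums s_i ≤ s, column sums t_j ≤ t, and total sum S. Let D ≥ 2, suppose Q has at least K ≥ 2st nonzero entries that are at most D, and at least J entries equal to D. Then the number of D-switchings applicable to Q is at least J·(K − 2st)^D. -/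
open Finset

namespace Stmt9Aux

open scoped Classical

lemma card_nonzero_le {N : ℕ} (f : Fin N → ℕ) :
    (univ.filter fun j => f j ≠ 0).card ≤ ∑ j, f j := by
  calc (univ.filter fun j => f j ≠ 0).card
      = ∑ _j ∈ univ.filter (fun j => f j ≠ 0), 1 := (Finset.card_eq_sum_ones _)
    _ ≤ ∑ j ∈ univ.filter (fun j => f j ≠ 0), f j :=
        Finset.sum_le_sum fun j hj => Nat.one_le_iff_ne_zero.2 (Finset.mem_filter.1 hj).2
    _ ≤ ∑ j, f j := Finset.sum_le_sum_of_subset (Finset.filter_subset _ _)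

lemma card_nonzero_refined {N : ℕ} (f : Fin N → ℕ) (j0 : Fin N) (hne : f j0 ≠ 0) :
    f j0 + ((univ.filter fun j => f j ≠ 0).erase j0).card ≤ ∑ j, f j := by
  have hmem : j0 ∈ univ.filter fun j => f j ≠ 0 := by simp [hne]
  have h1 : ((univ.filter fun j => f j ≠ 0).erase j0).card
      ≤ ∑ j ∈ (univ.filter fun j => f j ≠ 0).erase j0, f j := by
    rw [Finset.card_eq_sum_ones]
    exact Finset.sum_le_sum fun j hj =>
      Nat.one_le_iff_ne_zero.2 (Finset.mem_filter.1 (Finset.mem_of_mem_erase hj)).2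
  calc f j0 + ((univ.filter fun j => f j ≠ 0).erase j0).card
      ≤ f j0 + ∑ j ∈ (univ.filter fun j => f j ≠ 0).erase j0, f j := by omega
    _ = ∑ j ∈ univ.filter (fun j => f j ≠ 0), f j := Finset.add_sum_erase _ f hmem
    _ ≤ ∑ j, f j := Finset.sum_le_sum_of_subset (Finset.filter_subset _ _)

variable {m n : ℕ}

lemma card_col_eq (Q : Matrix (Fin m) (Fin n) ℕ) (j : Fin n) :
    (univ.filter fun a : Fin m × Fin n => Q a.1 a.2 ≠ 0 ∧ a.2 = j).card
      = (univ.filter fun i => Q i j ≠ 0).card := by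
  apply Finset.card_bij (fun a _ => a.1)
  · rintro ⟨i, j'⟩ ha
    simp only [Finset.mem_filter, Finset.mem_univ, true_and] at ha ⊢
    rcases ha with ⟨h1, rfl⟩; exact h1
  · rintro ⟨i, j'⟩ ha ⟨i', j''⟩ hb h
    simp only [Finset.mem_filter, Finset.mem_univ, true_and] at ha hb
    simp only at h
    simp [Prod.ext_iff, h, ha.2, hb.2]
  · intro i hi
    refine ⟨(i, j), ?_, rfl⟩
    simp only [Finset.mem_filter, Finset.mem_univ, true_and] at hi ⊢
    exact ⟨hi, trivial⟩

lemma card_row_eq (Q : Matrix (Fin m) (Fin n) ℕ) (i : Fin m) :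
    (univ.filter fun a : Fin m × Fin n => Q a.1 a.2 ≠ 0 ∧ a.1 = i).card
      = (univ.filter fun j => Q i j ≠ 0).card := by
  apply Finset.card_bij (fun a _ => a.2)
  · rintro ⟨i', j⟩ ha
    simp only [Finset.mem_filter, Finset.mem_univ, true_and] at ha ⊢
    rcases ha with ⟨h1, rfl⟩; exact h1
  · rintro ⟨i', j⟩ ha ⟨i'', j'⟩ hb h
    simp only [Finset.mem_filter, Finset.mem_univ, true_and] at ha hb
    simp only at h
    simp [Prod.ext_iff, h, ha.2, hb.2]
  · intro j hj
    refine ⟨(i, j), ?_, rfl⟩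
    simp only [Finset.mem_filter, Finset.mem_univ, true_and] at hj ⊢
    exact ⟨hj, trivial⟩

end Stmt9Aux

namespace Stmt9Aux
open scoped Classical

lemma ext_count {m n : ℕ} (s t D K k : ℕ) (hD : 2 ≤ D) (Q : Matrix (Fin m) (Fin n) ℕ)
    (hrow : ∀ i, ∑ j, Q i j ≤ s) (hcol : ∀ j, ∑ i, Q i j ≤ t)
    (hK : K ≤ (univ.filter (fun ij : Fin m × Fin n => Q ij.1 ij.2 ≠ 0 ∧ Q ij.1 ij.2 ≤ D)).card)
    (hk1 : k + 1 ≤ D) (p : Fin (D + 1) → Fin m × Fin n)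
    (hQ0 : Q (p 0).1 (p 0).2 = D) :
    K ≤ (univ.filter fun a : Fin m × Fin n =>
        (Q a.1 a.2 ≠ 0 ∧ Q a.1 a.2 ≤ D) ∧ Q a.1 (p 0).2 = 0 ∧ Q (p 0).1 a.2 = 0 ∧
        ∀ ℓ : Fin (D + 1), ℓ.val ≤ k → a.1 ≠ (p ℓ).1 ∧ a.2 ≠ (p ℓ).2).card + 2 * s * t := by
  set i0 := (p 0).1 with hi0
  set j0 := (p 0).2 with hj0
  set G : Finset (Fin m × Fin n) :=
    univ.filter (fun a : Fin m × Fin n => Q a.1 a.2 ≠ 0 ∧ Q a.1 a.2 ≤ D) with hG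
  set E : Finset (Fin m × Fin n) :=
    G.filter (fun a => Q a.1 j0 = 0 ∧ Q i0 a.2 = 0 ∧
      ∀ ℓ : Fin (D + 1), ℓ.val ≤ k → a.1 ≠ (p ℓ).1 ∧ a.2 ≠ (p ℓ).2) with hE
  have hEeq : (univ.filter fun a : Fin m × Fin n =>
        (Q a.1 a.2 ≠ 0 ∧ Q a.1 a.2 ≤ D) ∧ Q a.1 (p 0).2 = 0 ∧ Q (p 0).1 a.2 = 0 ∧
        ∀ ℓ : Fin (D + 1), ℓ.val ≤ k → a.1 ≠ (p ℓ).1 ∧ a.2 ≠ (p ℓ).2) = E := by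
    rw [hE, hG, Finset.filter_filter]
  rw [hEeq]
  set B : Finset (Fin m × Fin n) :=
    G.filter (fun a => ¬ (Q a.1 j0 = 0 ∧ Q i0 a.2 = 0 ∧
      ∀ ℓ : Fin (D + 1), ℓ.val ≤ k → a.1 ≠ (p ℓ).1 ∧ a.2 ≠ (p ℓ).2)) with hB
  have hsplit : E.card + B.card = G.card :=
    Finset.card_filter_add_card_filter_not _
  -- it suffices to bound B
  suffices hBle : B.card ≤ 2 * s * t by omega
  set Col : Fin n → Finset (Fin m × Fin n) :=
    fun j => univ.filter (fun a : Fin m × Fin n => Q a.1 a.2 ≠ 0 ∧ a.2 = j) with hCol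
  set Row : Fin m → Finset (Fin m × Fin n) :=
    fun i => univ.filter (fun a : Fin m × Fin n => Q a.1 a.2 ≠ 0 ∧ a.1 = i) with hRow
  set C1 : Finset (Fin n) := univ.filter (fun j => Q i0 j ≠ 0) with hC1
  set R1 : Finset (Fin m) := univ.filter (fun i => Q i j0 ≠ 0) with hR1
  set L : Finset (Fin (D + 1)) := univ.filter (fun ℓ => ℓ.val ≤ k ∧ ℓ ≠ 0) with hL
  set B1 := C1.biUnion Col with hB1
  set B2 := R1.biUnion Row with hB2
  set B3 := L.biUnion (fun ℓ => Row (p ℓ).1 ∪ Col (p ℓ).2) with hB3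
  have hDne : (D : ℕ) ≠ 0 := by omega
  have hj0C1 : j0 ∈ C1 := by simp [hC1, hQ0, hDne]
  have hi0R1 : i0 ∈ R1 := by simp [hR1, hQ0, hDne]
  -- subset of union
  have hsub : B ⊆ B1 ∪ B2 ∪ B3 := by
    intro a ha
    rw [hB, Finset.mem_filter] at ha
    obtain ⟨haG, hnot⟩ := ha
    rw [hG, Finset.mem_filter] at haG
    have haQ : Q a.1 a.2 ≠ 0 := haG.2.1
    simp only [Finset.mem_union]
    by_cases h1 : Q a.1 j0 = 0
    · by_cases h2 : Q i0 a.2 = 0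
      · -- some ℓ collides
        push_neg at hnot
        obtain ⟨ℓ, hℓk, hℓ⟩ := hnot h1 h2
        have hℓor : a.1 = (p ℓ).1 ∨ a.2 = (p ℓ).2 := by
          by_cases hc : a.1 = (p ℓ).1
          · exact Or.inl hc
          · exact Or.inr (hℓ hc)
        clear hℓ
        by_cases hℓ0 : ℓ = 0
        · exfalso
          subst hℓ0
          rcases hℓor with h | h
          · rw [← hi0] at h
            rw [h] at h1
            rw [h1] at hQ0
            omega
          · rw [← hj0] at h
            rw [← h] at h1
            exact haQ h1
        · right
          rw [hB3, Finset.mem_biUnion]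
          refine ⟨ℓ, by simp [hL, hℓk, hℓ0], ?_⟩
          rw [Finset.mem_union]
          rcases hℓor with h | h
          · left; rw [← h]; simp [hRow, haQ]
          · right; rw [← h]; simp [hCol, haQ]
      · left; left
        rw [hB1, Finset.mem_biUnion]
        exact ⟨a.2, by simp [hC1, h2], by simp [hCol, haQ]⟩
    · left; right
      rw [hB2, Finset.mem_biUnion]
      exact ⟨a.1, by simp [hR1, h1], by simp [hRow, haQ]⟩
  -- cardinal bounds
  have hColcard : ∀ j, (Col j).card ≤ t := by
    intro j
    rw [hCol]
    calc (univ.filter (fun a : Fin m × Fin n => Q a.1 a.2 ≠ 0 ∧ a.2 = j)).card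
        = (univ.filter fun i => Q i j ≠ 0).card := card_col_eq Q j
      _ ≤ ∑ i, Q i j := card_nonzero_le _
      _ ≤ t := hcol j
  have hRowcard : ∀ i, (Row i).card ≤ s := by
    intro i
    rw [hRow]
    calc (univ.filter (fun a : Fin m × Fin n => Q a.1 a.2 ≠ 0 ∧ a.1 = i)).card
        = (univ.filter fun j => Q i j ≠ 0).card := card_row_eq Q i
      _ ≤ ∑ j, Q i j := card_nonzero_le _
      _ ≤ s := hrow i
  set e1 := (C1.erase j0).card with he1def
  set e2 := (R1.erase i0).card with he2def
  have hC1card : C1.card = e1 + 1 := by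
    rw [he1def, Finset.card_erase_of_mem hj0C1]
    have := Finset.card_pos.2 ⟨j0, hj0C1⟩
    omega
  have hR1card : R1.card = e2 + 1 := by
    rw [he2def, Finset.card_erase_of_mem hi0R1]
    have := Finset.card_pos.2 ⟨i0, hi0R1⟩
    omega
  have he1 : e1 + D ≤ s := by
    have h := card_nonzero_refined (fun j => Q i0 j) j0 (by simp [hQ0, hDne])
    simp only [hQ0] at h
    have h2 := hrow i0
    rw [hC1] at he1def
    omega
  have he2 : e2 + D ≤ t := by
    have h := card_nonzero_refined (fun i => Q i j0) i0 (by simp [hQ0, hDne])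
    simp only [hQ0] at h
    have h2 := hcol j0
    rw [hR1] at he2def
    omega
  have hColj0 : (Col j0).card = e2 + 1 := by
    rw [hCol]
    calc (univ.filter (fun a : Fin m × Fin n => Q a.1 a.2 ≠ 0 ∧ a.2 = j0)).card
        = (univ.filter fun i => Q i j0 ≠ 0).card := card_col_eq Q j0
      _ = e2 + 1 := by rw [← hR1, hR1card]
  have hRowi0 : (Row i0).card = e1 + 1 := by
    rw [hRow]
    calc (univ.filter (fun a : Fin m × Fin n => Q a.1 a.2 ≠ 0 ∧ a.1 = i0)).card
        = (univ.filter fun j => Q i0 j ≠ 0).card := card_row_eq Q i0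
      _ = e1 + 1 := by rw [← hC1, hC1card]
  have hB1card : B1.card ≤ (e2 + 1) + e1 * t := by
    calc B1.card ≤ ∑ j ∈ C1, (Col j).card := Finset.card_biUnion_le
      _ = (Col j0).card + ∑ j ∈ C1.erase j0, (Col j).card :=
          (Finset.add_sum_erase _ _ hj0C1).symm
      _ ≤ (e2 + 1) + e1 * t := by
          rw [hColj0]
          have : ∑ j ∈ C1.erase j0, (Col j).card ≤ e1 * t := by
            calc ∑ j ∈ C1.erase j0, (Col j).card ≤ (C1.erase j0).card • t :=
                Finset.sum_le_card_nsmul _ _ _ (fun j _ => hColcard j)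
              _ = e1 * t := by rw [smul_eq_mul]
          omega
  have hB2card : B2.card ≤ (e1 + 1) + e2 * s := by
    calc B2.card ≤ ∑ i ∈ R1, (Row i).card := Finset.card_biUnion_le
      _ = (Row i0).card + ∑ i ∈ R1.erase i0, (Row i).card :=
          (Finset.add_sum_erase _ _ hi0R1).symm
      _ ≤ (e1 + 1) + e2 * s := by
          rw [hRowi0]
          have : ∑ i ∈ R1.erase i0, (Row i).card ≤ e2 * s := by
            calc ∑ i ∈ R1.erase i0, (Row i).card ≤ (R1.erase i0).card • s :=
                Finset.sum_le_card_nsmul _ _ _ (fun i _ => hRowcard i)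
              _ = e2 * s := by rw [smul_eq_mul]
          omega
  have hLcard : L.card ≤ k := by
    have : L.card ≤ (Finset.range k).card := by
      apply Finset.card_le_card_of_injOn (fun ℓ => ℓ.val - 1)
      · intro ℓ hℓ
        simp only [Finset.mem_coe, hL, Finset.mem_filter] at hℓ
        have hv : ℓ.val ≠ 0 := fun h => hℓ.2.2 (Fin.ext (by simp [h]))
        simp only [Finset.mem_coe, Finset.mem_range]
        omega
      · intro ℓ hℓ ℓ' hℓ' h
        simp only [Finset.mem_coe, hL, Finset.mem_filter] at hℓ hℓ'
        have hv : ℓ.val ≠ 0 := fun h => hℓ.2.2 (Fin.ext (by simp [h]))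
        have hv' : ℓ'.val ≠ 0 := fun h => hℓ'.2.2 (Fin.ext (by simp [h]))
        have h' : ℓ.val - 1 = ℓ'.val - 1 := h
        exact Fin.ext (by omega)
    simpa using this
  have hB3card : B3.card ≤ k * (s + t) := by
    calc B3.card ≤ ∑ ℓ ∈ L, (Row (p ℓ).1 ∪ Col (p ℓ).2).card := Finset.card_biUnion_le
      _ ≤ L.card • (s + t) := by
          apply Finset.sum_le_card_nsmul
          intro ℓ _
          calc (Row (p ℓ).1 ∪ Col (p ℓ).2).card
              ≤ (Row (p ℓ).1).card + (Col (p ℓ).2).card := Finset.card_union_le _ _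
            _ ≤ s + t := Nat.add_le_add (hRowcard _) (hColcard _)
      _ ≤ k * (s + t) := by rw [smul_eq_mul]; exact Nat.mul_le_mul_right _ hLcard
  have hBcard : B.card ≤ ((e2 + 1) + e1 * t) + ((e1 + 1) + e2 * s) + k * (s + t) := by
    calc B.card ≤ (B1 ∪ B2 ∪ B3).card := Finset.card_le_card hsub
      _ ≤ (B1 ∪ B2).card + B3.card := Finset.card_union_le _ _
      _ ≤ B1.card + B2.card + B3.card := Nat.add_le_add_right (Finset.card_union_le _ _) _
      _ ≤ _ := by omega
  -- arithmetic
  have h1 : (e1 + k + 1) * t ≤ s * t := Nat.mul_le_mul_right _ (by omega)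
  have h2 : (e2 + k + 1) * s ≤ t * s := Nat.mul_le_mul_right _ (by omega)
  have h3 : e1 + e2 + 2 ≤ s + t := by omega
  calc B.card ≤ ((e2 + 1) + e1 * t) + ((e1 + 1) + e2 * s) + k * (s + t) := hBcard
    _ ≤ 2 * s * t := by nlinarith [h1, h2, h3]

end Stmt9Aux

namespace Stmt9Aux
open scoped Classical

def goodP {m n : ℕ} (D : ℕ) (Q : Matrix (Fin m) (Fin n) ℕ) (d0 : Fin m × Fin n) (k : ℕ)
    (p : Fin (D + 1) → Fin m × Fin n) : Prop :=
  (∀ ℓ : Fin (D + 1), k < ℓ.val → p ℓ = d0) ∧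
  (∀ ℓ ℓ' : Fin (D + 1), ℓ.val ≤ k → ℓ'.val ≤ k → (p ℓ).1 = (p ℓ').1 → ℓ = ℓ') ∧
  (∀ ℓ ℓ' : Fin (D + 1), ℓ.val ≤ k → ℓ'.val ≤ k → (p ℓ).2 = (p ℓ').2 → ℓ = ℓ') ∧
  Q (p 0).1 (p 0).2 = D ∧
  (∀ ℓ : Fin (D + 1), ℓ.val ≤ k → ℓ ≠ 0 →
    (Q (p ℓ).1 (p ℓ).2 ≠ 0 ∧ Q (p ℓ).1 (p ℓ).2 ≤ D) ∧
      Q (p ℓ).1 (p 0).2 = 0 ∧ Q (p 0).1 (p ℓ).2 = 0)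

end Stmt9Aux


open Stmt9Aux


/-- Lower bound on the number of `D`-switchings applicable to a matrix `Q` with row sums
at most `s`, column sums at most `t`: if `Q` has at least `K ≥ 2st` nonzero entries that are
at most `D`, and at least `J` entries equal to `D`, then there are at least `J·(K−2st)^D`
`D`-switchings.  A `D`-switching is a tuple of positions `(i_0,j_0),…,(i_D,j_D)` with distinct
rows and distinct columns, `Q[i_0,j_0]=D`, `Q[i_ℓ,j_ℓ] ∉ {0,D+1}` and
`Q[i_ℓ,j_0]=Q[i_0,j_ℓ]=0` for `1 ≤ ℓ ≤ D`. -/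
theorem stmt_9 (m n s t D K J : ℕ) (hD : 2 ≤ D)
    (Q : Matrix (Fin m) (Fin n) ℕ)
    (hrow : ∀ i, ∑ j, Q i j ≤ s) (hcol : ∀ j, ∑ i, Q i j ≤ t)
    (hst : 2 * s * t ≤ K)
    (hK : K ≤ (Finset.univ.filter
        (fun ij : Fin m × Fin n => Q ij.1 ij.2 ≠ 0 ∧ Q ij.1 ij.2 ≤ D)).card)
    (hJ : J ≤ (Finset.univ.filter
        (fun ij : Fin m × Fin n => Q ij.1 ij.2 = D)).card) :
    J * (K - 2 * s * t) ^ D ≤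
      (Finset.univ.filter (fun p : Fin (D + 1) → Fin m × Fin n =>
        (Function.Injective fun ℓ => (p ℓ).1) ∧
        (Function.Injective fun ℓ => (p ℓ).2) ∧
        Q (p 0).1 (p 0).2 = D ∧
        (∀ ℓ : Fin (D + 1), ℓ ≠ 0 →
          Q (p ℓ).1 (p ℓ).2 ≠ 0 ∧ Q (p ℓ).1 (p ℓ).2 ≠ D + 1) ∧
        (∀ ℓ : Fin (D + 1), ℓ ≠ 0 →
          Q (p ℓ).1 (p 0).2 = 0 ∧ Q (p 0).1 (p ℓ).2 = 0))).card := by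
  classical
  -- trivial case m = 0 or n = 0
  rcases Nat.eq_zero_or_pos m with hm | hm
  · have hcu : (Finset.univ.filter
        (fun ij : Fin m × Fin n => Q ij.1 ij.2 = D)).card ≤ m * n := by
      refine le_trans (Finset.card_le_card (Finset.subset_univ _)) ?_
      simp [Finset.card_univ]
    have : J = 0 := by
      subst hm
      simp only [Nat.zero_mul, Nat.mul_zero, Nat.le_zero] at hcu
      omega
    simp [this]
  rcases Nat.eq_zero_or_pos n with hn | hn
  · have hcu : (Finset.univ.filter
        (fun ij : Fin m × Fin n => Q ij.1 ij.2 = D)).card ≤ m * n := by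
      refine le_trans (Finset.card_le_card (Finset.subset_univ _)) ?_
      simp [Finset.card_univ]
    have : J = 0 := by
      subst hn
      simp only [Nat.zero_mul, Nat.mul_zero, Nat.le_zero] at hcu
      omega
    simp [this]
  set d0 : Fin m × Fin n := (⟨0, hm⟩, ⟨0, hn⟩) with hd0
  have hK' : K ≤ (Finset.univ.filter
      (fun ij : Fin m × Fin n => Q ij.1 ij.2 ≠ 0 ∧ Q ij.1 ij.2 ≤ D)).card := by
    convert hK using 2
  have key : ∀ k, k ≤ D →
      J * (K - 2 * s * t) ^ k ≤ (Finset.univ.filter (goodP D Q d0 k)).card := by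
    intro k
    induction k with
    | zero =>
      intro _
      rw [pow_zero, mul_one]
      refine le_trans hJ ?_
      apply Finset.card_le_card_of_injOn
        (fun ij => fun ℓ : Fin (D + 1) => if ℓ = 0 then ij else d0)
      · intro ij hij
        simp only [Finset.mem_coe, Finset.mem_filter] at hij
        rw [Finset.mem_coe, Finset.mem_filter]
        refine ⟨Finset.mem_univ _, ?_⟩
        unfold goodP
        refine ⟨?_, ?_, ?_, ?_, ?_⟩
        · intro ℓ hℓ
          show (if ℓ = 0 then ij else d0) = d0
          rw [if_neg (fun h => by subst h; simp at hℓ)]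
        · intro ℓ ℓ' hℓ hℓ' _
          have h1 : ℓ = 0 := Fin.ext (by simpa using hℓ)
          have h2 : ℓ' = 0 := Fin.ext (by simpa using hℓ')
          rw [h1, h2]
        · intro ℓ ℓ' hℓ hℓ' _
          have h1 : ℓ = 0 := Fin.ext (by simpa using hℓ)
          have h2 : ℓ' = 0 := Fin.ext (by simpa using hℓ')
          rw [h1, h2]
        · simpa using hij.2
        · intro ℓ hℓ hℓ0
          exact absurd (Fin.ext (by simpa using hℓ) : ℓ = 0) hℓ0
      · intro ij _ ij' _ h
        have := congrFun h 0
        simpa using this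
    | succ k ih =>
      intro hk1
      have hkD : k ≤ D := by omega
      set idx : Fin (D + 1) := ⟨k + 1, by omega⟩ with hidx
      have hidx0 : idx ≠ 0 := by
        intro h
        have := congrArg Fin.val h
        simp [hidx] at this
      set Sk := Finset.univ.filter (goodP D Q d0 k) with hSk
      set E : (Fin (D + 1) → Fin m × Fin n) → Finset (Fin m × Fin n) :=
        fun p => Finset.univ.filter (fun a : Fin m × Fin n =>
          (Q a.1 a.2 ≠ 0 ∧ Q a.1 a.2 ≤ D) ∧ Q a.1 (p 0).2 = 0 ∧ Q (p 0).1 a.2 = 0 ∧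
          ∀ ℓ : Fin (D + 1), ℓ.val ≤ k → a.1 ≠ (p ℓ).1 ∧ a.2 ≠ (p ℓ).2) with hEdef
      have hext : ∀ p ∈ Sk, K - 2 * s * t ≤ (E p).card := by
        intro p hp
        rw [hSk, Finset.mem_filter] at hp
        unfold goodP at hp
        have h := ext_count s t D K k hD Q hrow hcol hK' hk1 p hp.2.2.2.2.1
        simp only [hEdef]
        omega
      have hinj : (Sk.sigma E).card ≤
          (Finset.univ.filter (goodP D Q d0 (k + 1))).card := by
        apply Finset.card_le_card_of_injOn (fun x => Function.update x.1 idx x.2)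
        · rintro ⟨p, a⟩ hx
          dsimp only
          rw [Finset.mem_coe, Finset.mem_sigma] at hx
          obtain ⟨hp, ha⟩ := hx
          rw [hSk, Finset.mem_filter] at hp
          unfold goodP at hp
          obtain ⟨-, hc1, hc2, hc3, hc4, hc5⟩ := hp
          simp only [hEdef] at ha
          rw [Finset.mem_filter] at ha
          obtain ⟨-, haG, ha1, ha2, hadist⟩ := ha
          set q := Function.update p idx a with hq
          have hq0 : q 0 = p 0 := Function.update_of_ne (Ne.symm hidx0) _ _
          have hqidx : q idx = a := Function.update_self _ _ _
          have hqne : ∀ ℓ : Fin (D + 1), ℓ ≠ idx → q ℓ = p ℓ :=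
            fun ℓ h => Function.update_of_ne h _ _
          rw [Finset.mem_coe, Finset.mem_filter]
          refine ⟨Finset.mem_univ _, ?_⟩
          unfold goodP
          refine ⟨?_, ?_, ?_, ?_, ?_⟩
          · intro ℓ hℓ
            have hne : ℓ ≠ idx := by
              intro h; rw [h] at hℓ; simp [hidx] at hℓ
            rw [hqne ℓ hne]
            exact hc1 ℓ (by omega)
          · intro ℓ ℓ' hℓ hℓ' heq
            by_cases h : ℓ = idx <;> by_cases h' : ℓ' = idx
            · rw [h, h']
            · exfalso
              have hℓ'k : ℓ'.val ≤ k := by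
                have : ℓ'.val ≠ k + 1 := fun hc => h' (Fin.ext (by simp [hidx, hc]))
                omega
              rw [h, hqidx, hqne ℓ' h'] at heq
              exact (hadist ℓ' hℓ'k).1 heq
            · exfalso
              have hℓk : ℓ.val ≤ k := by
                have : ℓ.val ≠ k + 1 := fun hc => h (Fin.ext (by simp [hidx, hc]))
                omega
              rw [h', hqidx, hqne ℓ h] at heq
              exact (hadist ℓ hℓk).1 heq.symm
            · have hℓk : ℓ.val ≤ k := by
                have : ℓ.val ≠ k + 1 := fun hc => h (Fin.ext (by simp [hidx, hc]))
                omega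
              have hℓ'k : ℓ'.val ≤ k := by
                have : ℓ'.val ≠ k + 1 := fun hc => h' (Fin.ext (by simp [hidx, hc]))
                omega
              rw [hqne ℓ h, hqne ℓ' h'] at heq
              exact hc2 ℓ ℓ' hℓk hℓ'k heq
          · intro ℓ ℓ' hℓ hℓ' heq
            by_cases h : ℓ = idx <;> by_cases h' : ℓ' = idx
            · rw [h, h']
            · exfalso
              have hℓ'k : ℓ'.val ≤ k := by
                have : ℓ'.val ≠ k + 1 := fun hc => h' (Fin.ext (by simp [hidx, hc]))
                omega
              rw [h, hqidx, hqne ℓ' h'] at heq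
              exact (hadist ℓ' hℓ'k).2 heq
            · exfalso
              have hℓk : ℓ.val ≤ k := by
                have : ℓ.val ≠ k + 1 := fun hc => h (Fin.ext (by simp [hidx, hc]))
                omega
              rw [h', hqidx, hqne ℓ h] at heq
              exact (hadist ℓ hℓk).2 heq.symm
            · have hℓk : ℓ.val ≤ k := by
                have : ℓ.val ≠ k + 1 := fun hc => h (Fin.ext (by simp [hidx, hc]))
                omega
              have hℓ'k : ℓ'.val ≤ k := by
                have : ℓ'.val ≠ k + 1 := fun hc => h' (Fin.ext (by simp [hidx, hc]))
                omega
              rw [hqne ℓ h, hqne ℓ' h'] at heq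
              exact hc3 ℓ ℓ' hℓk hℓ'k heq
          · rw [hq0]; exact hc4
          · intro ℓ hℓ hℓ0
            by_cases h : ℓ = idx
            · rw [h, hqidx, hq0]
              exact ⟨haG, ha1, ha2⟩
            · have hℓk : ℓ.val ≤ k := by
                have : ℓ.val ≠ k + 1 := fun hc => h (Fin.ext (by simp [hidx, hc]))
                omega
              rw [hqne ℓ h, hq0]
              exact hc5 ℓ hℓk hℓ0
        · rintro ⟨p, a⟩ hx ⟨p', a'⟩ hx' h
          rw [Finset.mem_coe, Finset.mem_sigma] at hx hx'
          obtain ⟨hp, -⟩ := hx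
          obtain ⟨hp', -⟩ := hx'
          rw [hSk, Finset.mem_filter] at hp hp'
          unfold goodP at hp hp'
          change Function.update p idx a = Function.update p' idx a' at h
          have ha : a = a' := by
            have := congrFun h idx
            simpa [Function.update_self] using this
          have hpp : p = p' := by
            funext ℓ
            by_cases hℓ : ℓ = idx
            · rw [hℓ]
              have e1 : p idx = d0 := hp.2.1 idx (by simp [hidx])
              have e2 : p' idx = d0 := hp'.2.1 idx (by simp [hidx])
              rw [e1, e2]
            · have := congrFun h ℓ
              rwa [Function.update_of_ne hℓ, Function.update_of_ne hℓ] at this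
          subst ha; subst hpp; rfl
      calc J * (K - 2 * s * t) ^ (k + 1)
          = J * (K - 2 * s * t) ^ k * (K - 2 * s * t) := by ring
        _ ≤ Sk.card * (K - 2 * s * t) :=
            Nat.mul_le_mul_right _ (ih hkD)
        _ = Sk.card • (K - 2 * s * t) := by rw [smul_eq_mul]
        _ ≤ ∑ p ∈ Sk, (E p).card := Finset.card_nsmul_le_sum _ _ _ hext
        _ = (Sk.sigma E).card := (Finset.card_sigma _ _).symm
        _ ≤ _ := hinj
  -- conclude
  refine le_trans (key D le_rfl) (Finset.card_le_card ?_)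
  intro p hp
  rw [Finset.mem_filter] at hp
  unfold goodP at hp
  obtain ⟨-, hc1, hc2, hc3, hc4, hc5⟩ := hp
  rw [Finset.mem_filter]
  refine ⟨Finset.mem_univ _, ?_, ?_, hc4, ?_, ?_⟩
  · exact fun ℓ ℓ' h => hc2 ℓ ℓ' (Fin.is_le ℓ) (Fin.is_le ℓ') h
  · exact fun ℓ ℓ' h => hc3 ℓ ℓ' (Fin.is_le ℓ) (Fin.is_le ℓ') h
  · intro ℓ hℓ0
    obtain ⟨⟨h1, h2⟩, -⟩ := hc5 ℓ (Fin.is_le ℓ) hℓ0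
    exact ⟨h1, by omega⟩
  · intro ℓ hℓ0
    exact (hc5 ℓ (Fin.is_le ℓ) hℓ0).2
end

section
/- Let Q be an m×n nonnegative integer matrix with margins s, t and define S_k = ∑_i [s_i]_k and T_k = ∑_j [t_j]_k where [x]_k = x(x−1)···(x−k+1). For D ≥ 2, the number of reverse D-switchings applicable to Q is at most S_D·T_D. -/
lemma count_inj_le (D N : ℕ) (P : Fin N → Prop) [DecidablePred P] :
    (Finset.univ.filter (fun f : Fin D → Fin N =>
      Function.Injective f ∧ ∀ k, P (f k))).card ≤
      (Finset.univ.filter (fun x => P x)).card.descFactorial D := by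
  classical
  rw [← Fintype.card_subtype, ← Fintype.card_subtype]
  have hinj : Function.Injective
      (fun f : {f : Fin D → Fin N // Function.Injective f ∧ ∀ k, P (f k)} =>
        (⟨fun k => (⟨f.1 k, f.2.2 k⟩ : {x // P x}),
          fun a b hab => f.2.1 (congrArg Subtype.val hab)⟩ : Fin D ↪ {x // P x})) := by
    intro f g h
    apply Subtype.ext
    funext k
    have := congrFun (congrArg (fun e : Fin D ↪ {x // P x} => (e : Fin D → {x // P x})) h) k
    exact congrArg Subtype.val this
  calc Fintype.card {f : Fin D → Fin N // Function.Injective f ∧ ∀ k, P (f k)}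
      ≤ Fintype.card (Fin D ↪ {x // P x}) := Fintype.card_le_of_injective _ hinj
    _ = (Fintype.card {x // P x}).descFactorial D := by
        rw [Fintype.card_embedding_eq, Fintype.card_fin]

lemma side_bound {M N : ℕ} (D : ℕ) (A : Fin M → Fin N → ℕ) (s : Fin M → ℕ)
    (hrow : ∀ i, ∑ j, A i j = s i) :
    (Finset.univ.filter (fun x : Fin M × (Fin D → Fin N) =>
        Function.Injective x.2 ∧ ∀ k, A x.1 (x.2 k) = 1)).card
      ≤ ∑ i, (s i).descFactorial D := by
  classical
  rw [Finset.card_eq_sum_card_fiberwise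
    (f := fun x : Fin M × (Fin D → Fin N) => x.1) (t := Finset.univ)
    (fun x _ => Finset.mem_univ _)]
  apply Finset.sum_le_sum
  intro i _
  have h1 : ((Finset.univ.filter (fun x : Fin M × (Fin D → Fin N) =>
      Function.Injective x.2 ∧ ∀ k, A x.1 (x.2 k) = 1)).filter
        (fun x => x.1 = i)).card ≤
      (Finset.univ.filter (fun f : Fin D → Fin N =>
        Function.Injective f ∧ ∀ k, A i (f k) = 1)).card := by
    apply Finset.card_le_card_of_injOn (fun x => x.2)
    · intro x hx
      simp only [Finset.mem_coe, Finset.mem_filter, Finset.mem_univ, true_and] at hx ⊢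
      rcases hx with ⟨⟨h2, h3⟩, h4⟩
      subst h4
      exact ⟨h2, h3⟩
    · intro x hx y hy hxy
      simp only [Finset.mem_coe, Finset.mem_filter] at hx hy
      exact Prod.ext (hx.2.trans hy.2.symm) hxy
  refine h1.trans ((count_inj_le D N (fun j => A i j = 1)).trans ?_)
  apply Nat.descFactorial_le
  rw [← hrow i]
  calc (Finset.univ.filter (fun j => A i j = 1)).card
      = ∑ _j ∈ Finset.univ.filter (fun j => A i j = 1), 1 :=
        Finset.card_eq_sum_ones _
    _ ≤ ∑ j ∈ Finset.univ.filter (fun j => A i j = 1), A i j := by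
        apply Finset.sum_le_sum
        intro j hj
        simp only [Finset.mem_filter] at hj
        exact le_of_eq hj.2.symm
    _ ≤ ∑ j, A i j := Finset.sum_le_sum_of_subset (Finset.filter_subset _ _)



/-- Upper bound on the number of reverse `D`-switchings applicable to a matrix `R` with
row sums `s_i` and column sums `t_j`: it is at most `S_D·T_D` where
`S_D = ∑_i [s_i]_D` and `T_D = ∑_j [t_j]_D` (falling factorials).  A reverse `D`-switching
is a tuple of positions `(i_0,j_0),…,(i_D,j_D)` with distinct rows and distinct columns,
`R[i_0,j_0]=0`, `R[i_ℓ,j_ℓ] ≠ D` and `R[i_ℓ,j_0]=R[i_0,j_ℓ]=1` for `1 ≤ ℓ ≤ D`. -/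
theorem stmt_10 (m n D : ℕ) (hD : 2 ≤ D)
    (s : Fin m → ℕ) (t : Fin n → ℕ)
    (R : Matrix (Fin m) (Fin n) ℕ)
    (hrow : ∀ i, ∑ j, R i j = s i) (hcol : ∀ j, ∑ i, R i j = t j) :
    (Finset.univ.filter (fun p : Fin (D + 1) → Fin m × Fin n =>
        (Function.Injective fun ℓ => (p ℓ).1) ∧
        (Function.Injective fun ℓ => (p ℓ).2) ∧
        R (p 0).1 (p 0).2 = 0 ∧
        (∀ ℓ : Fin (D + 1), ℓ ≠ 0 → R (p ℓ).1 (p ℓ).2 ≠ D) ∧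
        (∀ ℓ : Fin (D + 1), ℓ ≠ 0 →
          R (p ℓ).1 (p 0).2 = 1 ∧ R (p 0).1 (p ℓ).2 = 1))).card
      ≤ (∑ i, (s i).descFactorial D) * ∑ j, (t j).descFactorial D := by
  classical
  set SA := Finset.univ.filter (fun x : Fin m × (Fin D → Fin n) =>
      Function.Injective x.2 ∧ ∀ k, R x.1 (x.2 k) = 1) with hSA
  set SB := Finset.univ.filter (fun x : Fin n × (Fin D → Fin m) =>
      Function.Injective x.2 ∧ ∀ k, R (x.2 k) x.1 = 1) with hSB
  have key : (Finset.univ.filter (fun p : Fin (D + 1) → Fin m × Fin n =>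
        (Function.Injective fun ℓ => (p ℓ).1) ∧
        (Function.Injective fun ℓ => (p ℓ).2) ∧
        R (p 0).1 (p 0).2 = 0 ∧
        (∀ ℓ : Fin (D + 1), ℓ ≠ 0 → R (p ℓ).1 (p ℓ).2 ≠ D) ∧
        (∀ ℓ : Fin (D + 1), ℓ ≠ 0 →
          R (p ℓ).1 (p 0).2 = 1 ∧ R (p 0).1 (p ℓ).2 = 1))).card ≤ (SA ×ˢ SB).card := by
    apply Finset.card_le_card_of_injOn (fun p =>
      (((p 0).1, fun k : Fin D => (p k.succ).2), ((p 0).2, fun k : Fin D => (p k.succ).1)))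
    · intro p hp
      simp only [Finset.mem_coe, Finset.mem_filter, Finset.mem_univ, true_and] at hp
      obtain ⟨h1, h2, _h3, _h4, h5⟩ := hp
      rw [Finset.mem_coe, Finset.mem_product]
      constructor
      · rw [hSA, Finset.mem_filter]
        refine ⟨Finset.mem_univ _, fun a b hab => Fin.succ_injective D (h2 hab), fun k => ?_⟩
        exact (h5 k.succ (Fin.succ_ne_zero k)).2
      · rw [hSB, Finset.mem_filter]
        refine ⟨Finset.mem_univ _, fun a b hab => Fin.succ_injective D (h1 hab), fun k => ?_⟩
        exact (h5 k.succ (Fin.succ_ne_zero k)).1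
    · intro p _hp q _hq hpq
      have e1 : (p 0).1 = (q 0).1 := congrArg (fun z => z.1.1) hpq
      have e2 : (fun k : Fin D => (p k.succ).2) = (fun k : Fin D => (q k.succ).2) :=
        congrArg (fun z => z.1.2) hpq
      have e3 : (p 0).2 = (q 0).2 := congrArg (fun z => z.2.1) hpq
      have e4 : (fun k : Fin D => (p k.succ).1) = (fun k : Fin D => (q k.succ).1) :=
        congrArg (fun z => z.2.2) hpq
      funext ℓ
      induction ℓ using Fin.cases with
      | zero => exact Prod.ext e1 e3
      | succ k => exact Prod.ext (congrFun e4 k) (congrFun e2 k)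
  refine key.trans ?_
  rw [Finset.card_product]
  exact Nat.mul_le_mul (side_bound D R s hrow) (side_bound D (fun j i => R i j) t hcol)
end

section
/- If a matrix Q has J entries equal to D and a D-switching is applied to Q, then the resulting matrix has at least J − D − 1 and at most J − 1 entries equal to D, and the number of entries greater than D is unchanged. -/
open Finset in
/-- Applying a `D`-switching to a matrix `Q` with `J` entries equal to `D` yields a matrix
with at least `J − D − 1` and at most `J − 1` entries equal to `D`, and the same number of
entries greater than `D`. -/
theorem stmt_11 (m n D J : ℕ) (hD : 2 ≤ D)
    (Q : Matrix (Fin m) (Fin n) ℕ)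
    (p : Fin (D + 1) → Fin m × Fin n)
    (hinj1 : Function.Injective fun ℓ => (p ℓ).1)
    (hinj2 : Function.Injective fun ℓ => (p ℓ).2)
    (h0 : Q (p 0).1 (p 0).2 = D)
    (hdiag : ∀ ℓ : Fin (D + 1), ℓ ≠ 0 →
      Q (p ℓ).1 (p ℓ).2 ≠ 0 ∧ Q (p ℓ).1 (p ℓ).2 ≠ D + 1)
    (hzero : ∀ ℓ : Fin (D + 1), ℓ ≠ 0 →
      Q (p ℓ).1 (p 0).2 = 0 ∧ Q (p 0).1 (p ℓ).2 = 0)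
    (R : Matrix (Fin m) (Fin n) ℕ)
    (hR : ∀ i j, R i j =
      if (i, j) = p 0 then 0
      else if ∃ ℓ : Fin (D + 1), ℓ ≠ 0 ∧ (i, j) = p ℓ then Q i j - 1
      else if ∃ ℓ : Fin (D + 1), ℓ ≠ 0 ∧
          ((i = (p 0).1 ∧ j = (p ℓ).2) ∨ (i = (p ℓ).1 ∧ j = (p 0).2)) then 1
      else Q i j)
    (hJ : J = (univ.filter (fun ij : Fin m × Fin n => Q ij.1 ij.2 = D)).card) :
    J - (D + 1) ≤ (univ.filter (fun ij : Fin m × Fin n => R ij.1 ij.2 = D)).card ∧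
    (univ.filter (fun ij : Fin m × Fin n => R ij.1 ij.2 = D)).card ≤ J - 1 ∧
    (univ.filter (fun ij : Fin m × Fin n => D < R ij.1 ij.2)).card =
      (univ.filter (fun ij : Fin m × Fin n => D < Q ij.1 ij.2)).card := by
  classical
  have key : ∀ i j, ((i, j) = p 0 ∧ R i j = 0) ∨
      (∃ ℓ : Fin (D + 1), ℓ ≠ 0 ∧ (i, j) = p ℓ ∧ R i j = Q i j - 1 ∧
        Q i j ≠ 0 ∧ Q i j ≠ D + 1) ∨
      (R i j = 1 ∧ Q i j = 0) ∨ R i j = Q i j := by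
    intro i j
    rw [hR i j]
    split_ifs with h1 h2 h3
    · exact Or.inl ⟨h1, rfl⟩
    · obtain ⟨ℓ, hℓ, heq⟩ := h2
      have hi : i = (p ℓ).1 := by rw [Prod.ext_iff] at heq; exact heq.1
      have hj : j = (p ℓ).2 := by rw [Prod.ext_iff] at heq; exact heq.2
      refine Or.inr (Or.inl ⟨ℓ, hℓ, heq, rfl, ?_, ?_⟩)
      · rw [hi, hj]; exact (hdiag ℓ hℓ).1
      · rw [hi, hj]; exact (hdiag ℓ hℓ).2
    · obtain ⟨ℓ, hℓ, hor⟩ := h3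
      refine Or.inr (Or.inr (Or.inl ⟨rfl, ?_⟩))
      rcases hor with ⟨hi, hj⟩ | ⟨hi, hj⟩
      · rw [hi, hj]; exact (hzero ℓ hℓ).2
      · rw [hi, hj]; exact (hzero ℓ hℓ).1
    · exact Or.inr (Or.inr (Or.inr rfl))
  set A := univ.filter (fun ij : Fin m × Fin n => Q ij.1 ij.2 = D) with hA
  set B := univ.filter (fun ij : Fin m × Fin n => R ij.1 ij.2 = D) with hB
  have hR0 : R (p 0).1 (p 0).2 = 0 := by
    rw [hR]
    simp
  have hp0A : p 0 ∈ A := by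
    simp only [hA, mem_filter, mem_univ, true_and]
    exact h0
  have hBsub : B ⊆ A.erase (p 0) := by
    intro ij hij
    simp only [hB, mem_filter, mem_univ, true_and] at hij
    rw [mem_erase]
    constructor
    · intro h
      rw [h] at hij
      have : R (p 0).1 (p 0).2 = D := hij
      omega
    · simp only [hA, mem_filter, mem_univ, true_and]
      rcases key ij.1 ij.2 with ⟨h1, h2⟩ | ⟨ℓ, hℓ, heq, h2, h3, h4⟩ | ⟨h1, h2⟩ | h1
      · omega
      · omega
      · omega
      · omega
  have hAsub : A ⊆ B ∪ (univ.image p) := by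
    intro ij hij
    simp only [hA, mem_filter, mem_univ, true_and] at hij
    rw [mem_union]
    rcases key ij.1 ij.2 with ⟨h1, h2⟩ | ⟨ℓ, hℓ, heq, h2, h3, h4⟩ | ⟨h1, h2⟩ | h1
    · right
      rw [mem_image]
      exact ⟨0, mem_univ _, h1.symm⟩
    · right
      rw [mem_image]
      exact ⟨ℓ, mem_univ _, heq.symm⟩
    · omega
    · left
      simp only [hB, mem_filter, mem_univ, true_and]
      omega
  have hcard1 : B.card ≤ A.card - 1 := by
    have := card_le_card hBsub
    rwa [card_erase_of_mem hp0A] at this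
  have hcard2 : A.card ≤ B.card + (D + 1) := by
    have h1 := card_le_card hAsub
    have h2 := card_union_le B (univ.image p)
    have h3 : (univ.image p).card ≤ D + 1 := by
      calc (univ.image p).card ≤ (univ : Finset (Fin (D + 1))).card := card_image_le
        _ = D + 1 := by simp
    omega
  have hApos : 1 ≤ A.card := card_pos.mpr ⟨p 0, hp0A⟩
  refine ⟨by omega, by omega, ?_⟩
  refine congrArg Finset.card ?_
  apply Finset.filter_congr
  intro ij _
  rcases key ij.1 ij.2 with ⟨h1, h2⟩ | ⟨ℓ, hℓ, heq, h2, h3, h4⟩ | ⟨h1, h2⟩ | h1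
  · have hQ : Q ij.1 ij.2 = D := by
      obtain ⟨e1, e2⟩ := Prod.ext_iff.mp h1
      rw [e1, e2]; exact h0
    simp only [h2, hQ]
    omega
  · simp only [h2]
    constructor <;> intro h <;> omega
  · simp only [h1, h2]
    omega
  · rw [h1]
end

section
/- Let G = (V,E) be a finite simple acyclic directed graph with disjoint finite sets C(v) associated to vertices v, and let S be a multiset of pairs (Q,R) such that for each (Q,R) ∈ S there is an edge vw ∈ E with Q ∈ C(v), R ∈ C(w). Suppose a, b : V → ℝ_{>0} satisfy: for each v, the number of pairs in S with first component in C(v) is at least a(v)·|C(v)|, and the number with second component in C(v) is at most b(v)·|C(v)|. Then for any nonempty Y ⊆ V, there is a directed path v_1,...,v_k with v_1 ∈ Y and v_k a sink such that (∑_{v∈Y}|C(v)|)/(∑_{v∈V}|C(v)|) ≤ (∑_{v_i∈Y} N(v_i))/(∑_{i=1}^k N(v_i)), where N(v_1)=1 and N(v_i) = a(v_1)···a(v_{i−1})/(b(v_2)···b(v_i)) for 2 ≤ i ≤ k. -/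
open Finset Relation

section Switching
set_option linter.unusedSectionVars false

variable {V : Type*} [Fintype V] [DecidableEq V]

noncomputable def rkE (E : V → V → Prop) (v : V) : ℕ := {w | Relation.TransGen E v w}.ncard

lemma rkE_lt {E : V → V → Prop} (hacyc : ∀ v, ¬ Relation.TransGen E v v)
    {v w : V} (h : E v w) : rkE E w < rkE E v := by
  apply Set.ncard_lt_ncard _ (Set.toFinite _)
  rw [Set.ssubset_iff_subset_ne]
  constructor
  · intro x hx; exact Relation.TransGen.head h hx
  · intro hEq
    have hw : w ∈ {x | Relation.TransGen E v x} := Relation.TransGen.single h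
    rw [← hEq] at hw
    exact hacyc w hw

variable (E : V → V → Prop) [DecidableRel E]

noncomputable def pathsFrom (hacyc : ∀ v, ¬ Relation.TransGen E v v) (v : V) :
    Finset (List V) :=
  if _ : ∀ w, ¬ E v w then {[v]}
  else (univ.filter (fun w => E v w)).attach.biUnion
    (fun w => (pathsFrom hacyc w.1).image (fun l => v :: l))
termination_by rkE E v
decreasing_by
  classical
  exact rkE_lt hacyc (Finset.mem_filter.mp w.2).2

variable (hacyc : ∀ v, ¬ Relation.TransGen E v v)

lemma pathsFrom_nonempty (v : V) : (pathsFrom E hacyc v).Nonempty := by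
  rw [pathsFrom]
  split_ifs with h
  · exact ⟨[v], mem_singleton_self _⟩
  · push_neg at h
    obtain ⟨w, hw⟩ := h
    have hw' : w ∈ univ.filter (fun w => E v w) := by simp [hw]
    obtain ⟨l, hl⟩ := pathsFrom_nonempty w
    exact ⟨v :: l, mem_biUnion.mpr ⟨⟨w, hw'⟩, mem_attach _ _, mem_image.mpr ⟨l, hl, rfl⟩⟩⟩
termination_by rkE E v
decreasing_by
  classical
  exact rkE_lt hacyc (Finset.mem_filter.mp hw').2

lemma pathsFrom_head {v : V} {l : List V} (hl : l ∈ pathsFrom E hacyc v) :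
    ∃ t, l = v :: t := by
  rw [pathsFrom] at hl
  split_ifs at hl with h
  · exact ⟨[], by simpa using hl⟩
  · obtain ⟨w, -, hl⟩ := mem_biUnion.mp hl
    obtain ⟨t, -, rfl⟩ := mem_image.mp hl
    exact ⟨t, rfl⟩

lemma pathsFrom_chain : ∀ (v : V) (l : List V), l ∈ pathsFrom E hacyc v → List.Chain' E l := by
  intro v l hl
  rw [pathsFrom] at hl
  split_ifs at hl with h
  · simp at hl; subst hl; exact List.isChain_singleton v
  · obtain ⟨w, -, hl⟩ := mem_biUnion.mp hl
    obtain ⟨t, ht, rfl⟩ := mem_image.mp hl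
    have hchain := pathsFrom_chain w.1 t ht
    obtain ⟨t', rfl⟩ := pathsFrom_head E hacyc ht
    exact List.IsChain.cons_cons (mem_filter.mp w.2).2 hchain
termination_by v => rkE E v
decreasing_by
  classical
  exact rkE_lt hacyc (Finset.mem_filter.mp w.2).2

lemma pathsFrom_last : ∀ (v : V) (l : List V) (_ : l ∈ pathsFrom E hacyc v) (hne : l ≠ []),
    ∀ u, ¬ E (l.getLast hne) u := by
  intro v l hl hne
  rw [pathsFrom] at hl
  split_ifs at hl with h
  · simp at hl; subst hl; simpa using h
  · obtain ⟨w, -, hl⟩ := mem_biUnion.mp hl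
    obtain ⟨t, ht, rfl⟩ := mem_image.mp hl
    have htne : t ≠ [] := by
      obtain ⟨t', rfl⟩ := pathsFrom_head E hacyc ht; simp
    have := pathsFrom_last w.1 t ht htne
    rwa [List.getLast_cons htne]
termination_by v => rkE E v
decreasing_by
  classical
  exact rkE_lt hacyc (Finset.mem_filter.mp w.2).2

variable (a b : V → ℝ) (Y : Finset V) (lam : ℝ)

noncomputable def Tl : List V → ℝ
  | [] => 0
  | [_] => 1
  | v :: w :: l => 1 + (a v / b w) * Tl (w :: l)

noncomputable def Wl : List V → ℝ
  | [] => 0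
  | [v] => if v ∈ Y then 1 else 0
  | v :: w :: l => (if v ∈ Y then 1 else 0) + (a v / b w) * Wl (w :: l)

lemma Tl_pos (ha0 : ∀ v, 0 < a v) (hb0 : ∀ v, 0 < b v) :
    ∀ (l : List V), l ≠ [] → 0 < Tl a b l
  | [], h => absurd rfl h
  | [_], _ => by simp [Tl]
  | v :: w :: l, _ => by
    rw [Tl]
    have h1 := Tl_pos ha0 hb0 (w :: l) (by simp)
    have h2 : 0 < a v / b w := div_pos (ha0 v) (hb0 w)
    nlinarith

lemma Wl_nonneg (ha0 : ∀ v, 0 < a v) (hb0 : ∀ v, 0 < b v) :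
    ∀ (l : List V), 0 ≤ Wl a b Y l
  | [] => le_refl _
  | [v] => by rw [Wl]; positivity
  | v :: w :: l => by
    rw [Wl]
    have := Wl_nonneg ha0 hb0 (w :: l)
    have h1 : (0:ℝ) ≤ if v ∈ Y then 1 else 0 := by positivity
    have h2 : 0 < a v / b w := div_pos (ha0 v) (hb0 w)
    nlinarith

lemma Tl_eq (d : V) : ∀ (l : List V), l ≠ [] →
    Tl a b l = ∑ i ∈ range l.length, ∏ j ∈ range i,
      (a (l.getD j d) / b (l.getD (j+1) d))
  | [], h => absurd rfl h
  | [v], _ => by simp [Tl]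
  | v :: w :: t, _ => by
    rw [Tl, Tl_eq d (w :: t) (by simp)]
    show _ = ∑ i ∈ range ((w :: t).length + 1), _
    rw [Finset.sum_range_succ']
    simp only [Finset.prod_range_succ', List.getD_cons_succ, List.getD_cons_zero,
      Finset.prod_range_zero, one_mul]
    rw [Finset.mul_sum]
    rw [add_comm]
    congr 1
    apply Finset.sum_congr rfl
    intro i _
    rw [mul_comm]

lemma Wl_eq (d : V) : ∀ (l : List V), l ≠ [] →
    Wl a b Y l = ∑ i ∈ range l.length, (if l.getD i d ∈ Y then (1:ℝ) else 0) * ∏ j ∈ range i,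
      (a (l.getD j d) / b (l.getD (j+1) d))
  | [], h => absurd rfl h
  | [v], _ => by simp [Wl]
  | v :: w :: t, _ => by
    rw [Wl, Wl_eq d (w :: t) (by simp)]
    show _ = ∑ i ∈ range ((w :: t).length + 1), _
    rw [Finset.sum_range_succ']
    simp only [Finset.prod_range_succ', List.getD_cons_succ, List.getD_cons_zero,
      Finset.prod_range_zero, one_mul, mul_one]
    rw [Finset.mul_sum]
    rw [add_comm]
    congr 1
    apply Finset.sum_congr rfl
    intro i _
    ring

lemma outs_attach_ne {v : V} (h : ¬ ∀ w, ¬ E v w) :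
    ((univ.filter (fun w => E v w)).attach : Finset _).Nonempty := by
  push_neg at h
  obtain ⟨w, hw⟩ := h
  exact Finset.attach_nonempty_iff.mpr ⟨w, by simp [hw]⟩

noncomputable def gf (hacyc : ∀ v, ¬ Relation.TransGen E v v) (v : V) : ℝ :=
  (if v ∈ Y then (1:ℝ) else 0) - lam +
    (if h : ∀ w, ¬ E v w then 0
     else a v * ((univ.filter (fun w => E v w)).attach.image
        (fun w => gf hacyc w.1 / b w.1)).max'
        ((outs_attach_ne E h).image _))
termination_by rkE E v
decreasing_by
  all_goals classical
  all_goals exact rkE_lt hacyc (Finset.mem_filter.mp w.2).2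

lemma gf_attained (v : V) : ∃ l ∈ pathsFrom E hacyc v,
    gf E a b Y lam hacyc v = Wl a b Y l - lam * Tl a b l := by
  rw [gf]
  by_cases hsink : ∀ w, ¬ E v w
  · rw [dif_pos hsink]
    refine ⟨[v], by rw [pathsFrom, dif_pos hsink]; simp, ?_⟩
    simp only [Wl, Tl]
    ring
  · rw [dif_neg hsink]
    obtain ⟨w, hwmem, hweq⟩ := Finset.mem_image.mp (Finset.max'_mem
      ((univ.filter (fun w => E v w)).attach.image
        (fun w => gf E a b Y lam hacyc w.1 / b w.1))
      ((outs_attach_ne E hsink).image _))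
    obtain ⟨l, hlmem, hleq⟩ := gf_attained w.1
    obtain ⟨t, rfl⟩ := pathsFrom_head E hacyc hlmem
    refine ⟨v :: w.1 :: t, ?_, ?_⟩
    · rw [pathsFrom, dif_neg hsink]
      exact mem_biUnion.mpr ⟨w, mem_attach _ _, mem_image.mpr ⟨_, hlmem, rfl⟩⟩
    · rw [← hweq]
      simp only [Wl, Tl]
      rw [hleq]
      ring
termination_by rkE E v
decreasing_by
  classical
  exact rkE_lt hacyc (Finset.mem_filter.mp w.2).2

lemma gf_nonpos (ha0 : ∀ v, 0 < a v) (hb0 : ∀ v, 0 < b v) (hlam : 0 ≤ lam)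
    (hmax : ∀ u ∈ Y, ∀ l ∈ pathsFrom E hacyc u, Wl a b Y l ≤ lam * Tl a b l)
    (v : V) : gf E a b Y lam hacyc v ≤ 0 := by
  by_cases hvY : v ∈ Y
  · obtain ⟨l, hl, heq⟩ := gf_attained E hacyc a b Y lam v
    rw [heq]
    have := hmax v hvY l hl
    linarith
  · rw [gf]
    by_cases hsink : ∀ w, ¬ E v w
    · rw [dif_pos hsink]
      simp only [hvY, if_false]
      linarith
    · rw [dif_neg hsink]
      have hind : (if v ∈ Y then (1:ℝ) else 0) - lam ≤ 0 := by
        simp only [hvY, if_false]; linarith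
      refine add_nonpos hind ?_
      refine mul_nonpos_iff.mpr (Or.inl ⟨(ha0 v).le, ?_⟩)
      apply Finset.max'_le
      intro y hy
      obtain ⟨w, hwmem, rfl⟩ := mem_image.mp hy
      have hgw : gf E a b Y lam hacyc w.1 ≤ 0 := gf_nonpos ha0 hb0 hlam hmax w.1
      exact div_nonpos_of_nonpos_of_nonneg hgw (hb0 w.1).le
termination_by rkE E v
decreasing_by
  classical
  exact rkE_lt hacyc (Finset.mem_filter.mp w.2).2

end Switching

lemma card_partition' {β ι : Type*} [Fintype ι] (q : ι → β → Prop) [∀ i, DecidablePred (q i)] :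
    ∀ (s : Multiset β), (∀ x ∈ s, ∃! i, q i x) →
      Multiset.card s = ∑ i, Multiset.card (s.filter (q i)) := by
  intro s
  induction s using Multiset.induction_on with
  | empty => simp
  | cons a s ih =>
    intro h
    obtain ⟨i₀, hi₀, huniq⟩ := h a (Multiset.mem_cons_self a s)
    have hs := ih (fun x hx => h x (Multiset.mem_cons_of_mem hx))
    simp only [Multiset.filter_cons, Multiset.card_add, Multiset.card_cons]
    rw [Finset.sum_add_distrib, ← hs]
    have hone : ∀ i : ι, Multiset.card (if q i a then ({a} : Multiset β) else 0)
        = if q i a then 1 else 0 := by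
      intro i; split_ifs <;> simp
    simp only [hone]
    have heq : univ.filter (fun x => q x a) = {i₀} := by
      ext x
      simp only [Finset.mem_filter, Finset.mem_univ, true_and, Finset.mem_singleton]
      exact ⟨fun hx => huniq x hx, fun hx => hx ▸ hi₀⟩
    have : (∑ x : ι, if q x a then (1:ℕ) else 0) = 1 := by
      rw [← Finset.card_filter, heq, Finset.card_singleton]
    omega

lemma N_conv' (i : ℕ) (f : ℕ → ℝ) (g : ℕ → ℝ) :
    (∏ j ∈ Finset.range i, f j) / (∏ j ∈ Finset.Icc 1 i, g j)
      = ∏ j ∈ Finset.range i, (f j / g (j+1)) := by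
  rw [Finset.prod_div_distrib]
  congr 1
  induction i with
  | zero => simp
  | succ n ih =>
    rw [Finset.prod_Icc_succ_top (Nat.le_add_left 1 n), ih, Finset.prod_range_succ]


open Finset in
/-- Abstract switching theorem (after Fack–McKay).  `E` is a finite acyclic digraph on `V`,
each `v` carries a finite set `C v` (pairwise disjoint), and `S` is a multiset of pairs
lying along edges.  If `a v·|C v|` lower-bounds the number of pairs starting in `C v` and
`b v·|C v|` upper-bounds the number ending in `C v`, then for any nonempty `Y ⊆ V` there is
a directed path `v_0,…,v_{k-1}` from `Y` to a sink with
`(∑_{v∈Y}|C v|)/(∑_v|C v|) ≤ (∑_{v_i∈Y} N i)/(∑_i N i)`,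
where `N i = a(v_0)⋯a(v_{i-1})/(b(v_1)⋯b(v_i))` (so `N 0 = 1`). -/
theorem stmt_12 {V α : Type*} [Fintype V] [DecidableEq V] [DecidableEq α]
    (E : V → V → Prop) [DecidableRel E]
    (hacyc : ∀ v : V, ¬ Relation.TransGen E v v)
    (C : V → Finset α)
    (hdisj : ∀ v w : V, v ≠ w → Disjoint (C v) (C w))
    (S : Multiset (α × α))
    (hS : ∀ pr ∈ S, ∃ v w, E v w ∧ pr.1 ∈ C v ∧ pr.2 ∈ C w)
    (a b : V → ℝ) (ha0 : ∀ v, 0 < a v) (hb0 : ∀ v, 0 < b v)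
    (ha : ∀ v, a v * (C v).card ≤ ((S.filter (fun pr => pr.1 ∈ C v)).card : ℝ))
    (hb : ∀ v, ((S.filter (fun pr => pr.2 ∈ C v)).card : ℝ) ≤ b v * (C v).card)
    (Y : Finset V) (hY : Y.Nonempty) :
    ∃ (k : ℕ) (_ : 0 < k) (v : ℕ → V),
      v 0 ∈ Y ∧
      (∀ i, i + 1 < k → E (v i) (v (i + 1))) ∧
      (∀ w, ¬ E (v (k - 1)) w) ∧
      ((∑ u ∈ Y, ((C u).card : ℝ)) / (∑ u : V, ((C u).card : ℝ)) ≤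
        (∑ i ∈ (range k).filter (fun i => v i ∈ Y),
            (∏ j ∈ range i, a (v j)) / ∏ j ∈ Icc 1 i, b (v j)) /
          (∑ i ∈ range k,
            (∏ j ∈ range i, a (v j)) / ∏ j ∈ Icc 1 i, b (v j))) := by
  classical
  -- counting facts
  have huniq2 : ∀ pr ∈ S, ∃! w, pr.2 ∈ C w := by
    intro pr hpr
    obtain ⟨v, w, hE, h1, h2⟩ := hS pr hpr
    exact ⟨w, h2, fun w' hw' => by
      by_contra hne
      exact Finset.disjoint_left.mp (hdisj w' w hne) hw' h2⟩
  have huniq1 : ∀ pr ∈ S, ∃! v, pr.1 ∈ C v := by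
    intro pr hpr
    obtain ⟨v, w, hE, h1, h2⟩ := hS pr hpr
    exact ⟨v, h1, fun v' hv' => by
      by_contra hne
      exact Finset.disjoint_left.mp (hdisj v' v hne) hv' h1⟩
  have hx1 : ∀ v, Multiset.card (S.filter (fun pr => pr.1 ∈ C v)) =
      ∑ w, Multiset.card (S.filter (fun pr => pr.1 ∈ C v ∧ pr.2 ∈ C w)) := by
    intro v
    rw [card_partition' (fun w pr => pr.2 ∈ C w) (S.filter (fun pr => pr.1 ∈ C v))
      (fun x hx => huniq2 x (Multiset.mem_of_mem_filter hx))]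
    apply Finset.sum_congr rfl
    intro w _
    rw [Multiset.filter_filter]
    exact congrArg _ (Multiset.filter_congr (fun x _ => and_comm))
  have hx2 : ∀ w, Multiset.card (S.filter (fun pr => pr.2 ∈ C w)) =
      ∑ v, Multiset.card (S.filter (fun pr => pr.1 ∈ C v ∧ pr.2 ∈ C w)) := by
    intro w
    rw [card_partition' (fun v pr => pr.1 ∈ C v) (S.filter (fun pr => pr.2 ∈ C w))
      (fun x hx => huniq1 x (Multiset.mem_of_mem_filter hx))]
    apply Finset.sum_congr rfl
    intro v _
    rw [Multiset.filter_filter]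
  have hxE : ∀ v w, Multiset.card (S.filter (fun pr => pr.1 ∈ C v ∧ pr.2 ∈ C w)) ≠ 0 → E v w := by
    intro v w hcard
    obtain ⟨pr, hpr⟩ := Multiset.card_pos_iff_exists_mem.mp (Nat.pos_of_ne_zero hcard)
    have h1 := Multiset.of_mem_filter hpr
    have hprS := Multiset.mem_of_mem_filter hpr
    obtain ⟨v', w', hE, hm1, hm2⟩ := hS pr hprS
    have hv : v = v' := by
      by_contra hne
      exact Finset.disjoint_left.mp (hdisj v v' hne) h1.1 hm1
    have hw : w = w' := by
      by_contra hne
      exact Finset.disjoint_left.mp (hdisj w w' hne) h1.2 hm2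
    rw [hv, hw]; exact hE
  have hsink0 : ∀ v, (∀ w, ¬ E v w) → Multiset.card (S.filter (fun pr => pr.1 ∈ C v)) = 0 := by
    intro v hv
    rw [Multiset.card_eq_zero, Multiset.filter_eq_nil]
    intro pr hpr hmem
    obtain ⟨v', w', hE, hm1, hm2⟩ := hS pr hpr
    have hveq : v = v' := by
      by_contra hne
      exact Finset.disjoint_left.mp (hdisj v v' hne) hmem hm1
    exact hv w' (hveq ▸ hE)
  -- choose the path maximizing the ratio
  obtain ⟨y0, hy0⟩ := hY
  have hQne : (Y.biUnion (fun u => pathsFrom E hacyc u)).Nonempty := by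
    obtain ⟨l, hl⟩ := pathsFrom_nonempty E hacyc y0
    exact ⟨l, mem_biUnion.mpr ⟨y0, hy0, hl⟩⟩
  obtain ⟨l0, hlQ, hlmax⟩ := Finset.exists_max_image _ (fun l => Wl a b Y l / Tl a b l) hQne
  obtain ⟨v0, hv0Y, hlp⟩ := mem_biUnion.mp hlQ
  obtain ⟨t, rfl⟩ := pathsFrom_head E hacyc hlp
  beta_reduce at hlmax
  set lam : ℝ := Wl a b Y (v0 :: t) / Tl a b (v0 :: t) with hlamdef
  have hTpos : ∀ (l' : List V), l' ≠ [] → 0 < Tl a b l' := Tl_pos a b ha0 hb0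
  have hlam0 : 0 ≤ lam := div_nonneg (Wl_nonneg a b Y ha0 hb0 _) (hTpos _ (by simp)).le
  have hmaxp : ∀ u ∈ Y, ∀ l' ∈ pathsFrom E hacyc u, Wl a b Y l' ≤ lam * Tl a b l' := by
    intro u hu l' hl'
    have h1 := hlmax l' (mem_biUnion.mpr ⟨u, hu, hl'⟩)
    have h2 : l' ≠ [] := by obtain ⟨t', rfl⟩ := pathsFrom_head E hacyc hl'; simp
    have h3 := hTpos l' h2
    calc Wl a b Y l' = Wl a b Y l' / Tl a b l' * Tl a b l' := (div_mul_cancel₀ _ h3.ne').symm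
      _ ≤ lam * Tl a b l' := mul_le_mul_of_nonneg_right h1 h3.le
  have hg0 : ∀ v, gf E a b Y lam hacyc v ≤ 0 := gf_nonpos E hacyc a b Y lam ha0 hb0 hlam0 hmaxp
  -- structural form of gf
  have hMex : ∀ v : V, ∃ M : ℝ,
      gf E a b Y lam hacyc v = (if v ∈ Y then (1:ℝ) else 0) - lam + a v * M
      ∧ M ≤ 0 ∧ (∀ w, E v w → gf E a b Y lam hacyc w / b w ≤ M)
      ∧ ((∀ w, ¬ E v w) → M = 0) := by
    intro v
    by_cases hs : ∀ w, ¬ E v w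
    · exact ⟨0, by rw [gf, dif_pos hs]; ring, le_refl 0,
        fun w hw => absurd hw (hs w), fun _ => rfl⟩
    · refine ⟨_, by rw [gf, dif_neg hs], ?_, ?_, fun hh => absurd hh hs⟩
      · apply Finset.max'_le
        intro y hy
        obtain ⟨w, hwm, rfl⟩ := mem_image.mp hy
        exact div_nonpos_of_nonpos_of_nonneg (hg0 w.1) (hb0 w.1).le
      · intro w hw
        apply Finset.le_max'
        exact mem_image.mpr ⟨⟨w, by simp [hw]⟩, mem_attach _ _, rfl⟩
  -- per-vertex inequality
  have hperv : ∀ v : V,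
      (if v ∈ Y then ((C v).card:ℝ) else 0) - lam * ((C v).card:ℝ)
        + ∑ w, ((Multiset.card (S.filter (fun pr => pr.1 ∈ C v ∧ pr.2 ∈ C w)) : ℝ))
            * (gf E a b Y lam hacyc w / b w)
      ≤ ((C v).card : ℝ) * gf E a b Y lam hacyc v := by
    intro v
    obtain ⟨M, hMeq, hM0, hMle, hMsink⟩ := hMex v
    have e1 : ((C v).card : ℝ) * gf E a b Y lam hacyc v
        = (if v ∈ Y then ((C v).card:ℝ) else 0) - lam * ((C v).card:ℝ)
          + ((C v).card:ℝ) * (a v * M) := by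
      rw [hMeq]; split_ifs <;> ring
    rw [e1]
    have hsum : ∑ w, ((Multiset.card (S.filter (fun pr => pr.1 ∈ C v ∧ pr.2 ∈ C w)) : ℝ))
        * (gf E a b Y lam hacyc w / b w) ≤ ((C v).card:ℝ) * (a v * M) := by
      by_cases hs : ∀ w, ¬ E v w
      · have hz : ∀ w, Multiset.card (S.filter (fun pr => pr.1 ∈ C v ∧ pr.2 ∈ C w)) = 0 := by
          intro w
          have h0 := hx1 v
          rw [hsink0 v hs] at h0
          exact (Finset.sum_eq_zero_iff.mp h0.symm) w (mem_univ w)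
        rw [hMsink hs]
        simp [hz]
      · have step1 : ∑ w, ((Multiset.card (S.filter (fun pr => pr.1 ∈ C v ∧ pr.2 ∈ C w)) : ℝ))
            * (gf E a b Y lam hacyc w / b w)
            ≤ ∑ w, ((Multiset.card (S.filter (fun pr => pr.1 ∈ C v ∧ pr.2 ∈ C w)) : ℝ)) * M := by
          apply Finset.sum_le_sum
          intro w _
          by_cases hzero : Multiset.card (S.filter (fun pr => pr.1 ∈ C v ∧ pr.2 ∈ C w)) = 0
          · rw [hzero]; simp
          · exact mul_le_mul_of_nonneg_left (hMle w (hxE v w hzero)) (by positivity)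
        have step2 : ∑ w, ((Multiset.card (S.filter (fun pr => pr.1 ∈ C v ∧ pr.2 ∈ C w)) : ℝ)) * M
            = ((Multiset.card (S.filter (fun pr => pr.1 ∈ C v)) : ℝ)) * M := by
          rw [← Finset.sum_mul]
          congr 1
          rw [hx1 v]
          push_cast
          rfl
        have step3 : ((Multiset.card (S.filter (fun pr => pr.1 ∈ C v)) : ℝ)) * M
            ≤ (a v * ((C v).card:ℝ)) * M := mul_le_mul_of_nonpos_right (ha v) hM0
        calc ∑ w, ((Multiset.card (S.filter (fun pr => pr.1 ∈ C v ∧ pr.2 ∈ C w)) : ℝ))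
              * (gf E a b Y lam hacyc w / b w)
            ≤ ∑ w, ((Multiset.card (S.filter (fun pr => pr.1 ∈ C v ∧ pr.2 ∈ C w)) : ℝ)) * M := step1
          _ = ((Multiset.card (S.filter (fun pr => pr.1 ∈ C v)) : ℝ)) * M := step2
          _ ≤ (a v * ((C v).card:ℝ)) * M := step3
          _ = ((C v).card:ℝ) * (a v * M) := by ring
    linarith
  -- per-target inequality
  have h2 : ∀ w : V, ((C w).card:ℝ) * gf E a b Y lam hacyc w
      ≤ (Multiset.card (S.filter (fun pr => pr.2 ∈ C w)):ℝ) * (gf E a b Y lam hacyc w / b w) := by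
    intro w
    have hq : gf E a b Y lam hacyc w / b w ≤ 0 :=
      div_nonpos_of_nonpos_of_nonneg (hg0 w) (hb0 w).le
    have h3 := mul_le_mul_of_nonpos_right (hb w) hq
    have heq : (b w * ((C w).card:ℝ)) * (gf E a b Y lam hacyc w / b w)
        = ((C w).card:ℝ) * gf E a b Y lam hacyc w := by
      have hbne : b w ≠ 0 := (hb0 w).ne'
      field_simp
    linarith
  have hswap : ∑ v, ∑ w, ((Multiset.card (S.filter (fun pr => pr.1 ∈ C v ∧ pr.2 ∈ C w)):ℝ))
        * (gf E a b Y lam hacyc w / b w)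
      = ∑ w, (Multiset.card (S.filter (fun pr => pr.2 ∈ C w)):ℝ)
        * (gf E a b Y lam hacyc w / b w) := by
    rw [Finset.sum_comm]
    apply Finset.sum_congr rfl
    intro w _
    rw [← Finset.sum_mul]
    congr 1
    rw [hx2 w]
    push_cast
    rfl
  have hite : ∑ v, (if v ∈ Y then ((C v).card:ℝ) else 0) = ∑ u ∈ Y, ((C u).card:ℝ) := by
    rw [Finset.sum_ite_mem, Finset.univ_inter]
  have key : (∑ u ∈ Y, ((C u).card:ℝ)) ≤ lam * ∑ u, ((C u).card:ℝ) := by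
    have h1 := Finset.sum_le_sum (fun v (_ : v ∈ (univ : Finset V)) => hperv v)
    rw [Finset.sum_add_distrib, Finset.sum_sub_distrib, hite, ← Finset.mul_sum, hswap] at h1
    have h2tot := Finset.sum_le_sum (fun w (_ : w ∈ (univ : Finset V)) => h2 w)
    linarith
  -- construct the answer
  refine ⟨(v0 :: t).length, by simp, fun i => (v0 :: t).getD i v0, by simpa using hv0Y, ?_, ?_, ?_⟩
  · intro i hi
    have hchain := pathsFrom_chain E hacyc v0 _ hlp
    simp only [List.Chain', List.isChain_iff_getElem] at hchain
    have hi2 : i + 1 < (v0::t).length := hi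
    have hi' : i < (v0::t).length - 1 := by omega
    have hE := hchain i (by omega)
    have g1 : (v0::t).getD i v0 = (v0::t).get ⟨i, by omega⟩ := by
      rw [List.getD_eq_getElem _ _ (by omega)]; simp
    have g2 : (v0::t).getD (i+1) v0 = (v0::t).get ⟨i+1, by omega⟩ := by
      rw [List.getD_eq_getElem _ _ (by omega)]; simp
    beta_reduce
    rw [g1, g2]
    exact hE
  · have hne : (v0::t) ≠ [] := by simp
    have hlast := pathsFrom_last E hacyc v0 _ hlp hne
    have g3 : (v0::t).getD ((v0::t).length - 1) v0 = (v0::t).getLast hne := by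
      rw [List.getLast_eq_getElem, List.getD_eq_getElem _ _ (by simp)]
    beta_reduce
    rw [g3]
    exact hlast
  · beta_reduce
    have hden : ∑ i ∈ range (v0::t).length,
        (∏ j ∈ range i, a ((v0::t).getD j v0)) / ∏ j ∈ Icc 1 i, b ((v0::t).getD j v0)
        = Tl a b (v0 :: t) := by
      rw [Tl_eq a b v0 (v0::t) (by simp)]
      exact Finset.sum_congr rfl (fun i _ => N_conv' i _ _)
    have hnum : ∑ i ∈ (range (v0::t).length).filter (fun i => (v0::t).getD i v0 ∈ Y),
        (∏ j ∈ range i, a ((v0::t).getD j v0)) / ∏ j ∈ Icc 1 i, b ((v0::t).getD j v0)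
        = Wl a b Y (v0 :: t) := by
      rw [Finset.sum_filter, Wl_eq a b Y v0 (v0::t) (by simp)]
      apply Finset.sum_congr rfl
      intro i _
      rw [N_conv' i _ _]
      split_ifs <;> simp
    rw [hnum, hden, ← hlamdef]
    by_cases hc0 : (∑ u : V, ((C u).card:ℝ)) = 0
    · rw [hc0, div_zero]
      exact hlam0
    · have hpos : 0 < ∑ u : V, ((C u).card:ℝ) :=
        lt_of_le_of_ne (Finset.sum_nonneg (fun u _ => by positivity)) (Ne.symm hc0)
      rw [div_le_iff₀ hpos]
      exact key
end

section
/- Let N ≥ 2 be an integer and suppose reals A(i) ≥ 0 and B(i) with 1 − (i−1)B(i) ≥ 0 are given for 1 ≤ i ≤ N. Set A_1 = min_i A(i), A_2 = max_i A(i), C_1 = min_i A(i)B(i), C_2 = max_i A(i)B(i), and suppose there is 0 < ĉ < 1/3 with max{A/N, |C|} ≤ ĉ for all A ∈ [A_1,A_2], C ∈ [C_1,C_2]. Define n_0 = 1 and n_i/n_{i−1} = (A(i)/i)(1 − (i−1)B(i)) (with n_j = 0 for j ≥ i if A(i) = 0 or 1 − (i−1)B(i) = 0). Then exp(A_1 −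 A_1 C_2 / 2) − (2eĉ)^N ≤ ∑_{i=0}^N n_i ≤ exp(A_2 − A_2 C_1 / 2 + A_2 C_1^2 / 2) + (2eĉ)^N. -/
open Finset Real

noncomputable def bb (A C : ℝ) (n : ℕ) : ℝ := ∏ j ∈ range n, ((A - j * C) / (j + 1))

lemma bb_succ (A C : ℝ) (n : ℕ) : bb A C (n + 1) = bb A C n * ((A - n * C) / (n + 1)) :=
  Finset.prod_range_succ _ n

lemma choose_le_two_pow' (m k : ℕ) : m.choose k ≤ 2 ^ m := by
  rcases le_or_gt k m with h | h
  · calc m.choose k ≤ ∑ i ∈ range (m + 1), m.choose i :=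
        Finset.single_le_sum (fun i _ => Nat.zero_le _) (by simp [Nat.lt_succ_of_le h])
      _ = 2 ^ m := Nat.sum_range_choose m
  · simp [Nat.choose_eq_zero_of_lt h]

lemma prod_shift_eq (M n : ℕ) :
    (∏ j ∈ range n, (M + 1 + j)) = (∏ j ∈ range n, (j + 1)) * (M + n).choose n := by
  induction n with
  | zero => simp
  | succ n ih =>
    rw [Finset.prod_range_succ, ih, Finset.prod_range_succ]
    have h : (M + n).succ * (M + n).choose n = (M + n).succ.choose n.succ * n.succ :=
      Nat.add_one_mul_choose_eq (M + n) n
    have : M + 1 + n = (M + n).succ := by omega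
    rw [this]
    calc (∏ j ∈ range n, (j + 1)) * (M + n).choose n * (M + n).succ
        = (∏ j ∈ range n, (j + 1)) * ((M + n).succ * (M + n).choose n) := by ring
      _ = (∏ j ∈ range n, (j + 1)) * ((M + n).succ.choose n.succ * n.succ) := by rw [h]
      _ = (∏ j ∈ range n, (j + 1)) * (n + 1) * (M + (n + 1)).choose (n + 1) := by
          simp only [Nat.succ_eq_add_one, Nat.add_assoc]
          ring

lemma prod_shift_le (M n : ℕ) :
    ((∏ j ∈ range n, (M + 1 + j)) : ℕ) ≤ 2 ^ (M + n) * ∏ j ∈ range n, (j + 1) := by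
  rw [prod_shift_eq, mul_comm]
  exact Nat.mul_le_mul_right _ (choose_le_two_pow' _ _)

lemma bb_abs_le (M : ℕ) (A C c : ℝ) (hA0 : 0 ≤ A) (hAN : A ≤ c * (M + 1))
    (hC : |C| ≤ c) (hc0 : 0 ≤ c) (n : ℕ) : |bb A C n| ≤ 2 ^ M * (2 * c) ^ n := by
  have hden : (0:ℝ) < ∏ j ∈ range n, ((j:ℝ) + 1) := Finset.prod_pos fun j _ => by positivity
  have key : |bb A C n| ≤ c ^ n * (((∏ j ∈ range n, (M + 1 + j) : ℕ) : ℝ) / ((∏ j ∈ range n, (j + 1) : ℕ) : ℝ)) := by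
    rw [bb, Finset.abs_prod]
    have h1 : ∀ j ∈ range n, |(A - j * C) / (j + 1)| ≤ c * ((M : ℝ) + 1 + j) / (j + 1) := by
      intro j _
      rw [abs_div, abs_of_pos (by positivity : (0:ℝ) < (j:ℝ) + 1)]
      apply div_le_div_of_nonneg_right ?_ (by positivity)
      calc |A - j * C| ≤ |A| + (j : ℝ) * |C| := by
            refine (abs_sub _ _).trans ?_
            rw [abs_mul, abs_of_nonneg (by positivity : (0:ℝ) ≤ (j:ℝ))]
      _ ≤ c * (M + 1) + j * c := by
            rw [abs_of_nonneg hA0]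
            have : (j : ℝ) * |C| ≤ j * c := mul_le_mul_of_nonneg_left hC (by positivity)
            linarith
      _ = c * ((M : ℝ) + 1 + j) := by ring
    calc ∏ j ∈ range n, |(A - j * C) / (j + 1)|
        ≤ ∏ j ∈ range n, (c * ((M : ℝ) + 1 + j) / (j + 1)) :=
          Finset.prod_le_prod (fun j _ => abs_nonneg _) h1
      _ = c ^ n * (((∏ j ∈ range n, (M + 1 + j) : ℕ) : ℝ) / ((∏ j ∈ range n, (j + 1) : ℕ) : ℝ)) := by
          push_cast
          rw [Finset.prod_div_distrib, Finset.prod_mul_distrib, Finset.prod_const, mul_div_assoc, Finset.card_range]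
  refine key.trans ?_
  have h2 : (((∏ j ∈ range n, (M + 1 + j) : ℕ) : ℝ) / ((∏ j ∈ range n, (j + 1) : ℕ) : ℝ)) ≤ 2 ^ (M + n) := by
    rw [div_le_iff₀ (by push_cast; exact hden)]
    calc (((∏ j ∈ range n, (M + 1 + j) : ℕ) : ℝ)) ≤ ((2 ^ (M + n) * ∏ j ∈ range n, (j + 1) : ℕ) : ℝ) := by
          exact_mod_cast prod_shift_le M n
      _ = 2 ^ (M + n) * ((∏ j ∈ range n, (j + 1) : ℕ) : ℝ) := by push_cast; ring
  calc c ^ n * (((∏ j ∈ range n, (M + 1 + j) : ℕ) : ℝ) / ((∏ j ∈ range n, (j + 1) : ℕ) : ℝ))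
      ≤ c ^ n * 2 ^ (M + n) := by
        exact mul_le_mul_of_nonneg_left h2 (by positivity)
    _ = 2 ^ M * (2 * c) ^ n := by rw [pow_add, mul_pow]; ring

lemma core (M : ℕ) (A C c : ℝ) (hA0 : 0 ≤ A) (hAN : A ≤ c * (M + 1))
    (hC : |C| ≤ c) (hc0 : 0 < c) (hc3 : c < 1 / 3) :
    HasSum (bb A C) (Real.exp (A * (if C = 0 then 1 else Real.log (1 + C) / C))) := by
  have habs := bb_abs_le M A C c hA0 hAN hC hc0.le
  have hq1 : (5 * c / 2) < 1 := by linarith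
  have hq0 : (0:ℝ) ≤ 5 * c / 2 := by linarith
  -- summability of the series at any |x| ≤ 5/4
  have hsum_x : ∀ x : ℝ, |x| ≤ 5 / 4 → Summable (fun n => bb A C n * x ^ n) := by
    intro x hx
    apply Summable.of_norm_bounded (g := fun n => 2 ^ M * (5 * c / 2) ^ n)
      ((summable_geometric_of_lt_one hq0 hq1).mul_left _)
    intro n
    have h1 : ‖bb A C n * x ^ n‖ = |bb A C n| * |x| ^ n := by
      rw [norm_mul, norm_pow]; rfl
    rw [h1]
    calc |bb A C n| * |x| ^ n ≤ (2 ^ M * (2 * c) ^ n) * (5 / 4) ^ n := by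
          apply mul_le_mul (habs n) (pow_le_pow_left₀ (abs_nonneg x) hx n) (by positivity) (by positivity)
      _ = 2 ^ M * (5 * c / 2) ^ n := by
          rw [mul_assoc, ← mul_pow]; ring_nf
  -- the derivative bound
  set u : ℕ → ℝ := fun n => 2 ^ M * (2 * c) * (n * (5 * c / 2) ^ (n - 1)) with hu
  have husum : Summable u := by
    apply Summable.mul_left
    have h2 : Summable (fun n : ℕ => ((n:ℝ) + 1) * (5 * c / 2) ^ n) := by
      have := summable_pow_mul_geometric_of_norm_lt_one (R := ℝ) 1 (r := 5 * c / 2)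
        (by rw [Real.norm_eq_abs, abs_of_nonneg hq0]; exact hq1)
      have h3 := this.add (summable_geometric_of_lt_one hq0 hq1)
      apply h3.congr
      intro b
      push_cast
      ring
    have := (summable_nat_add_iff (f := fun n : ℕ => (n:ℝ) * (5 * c / 2) ^ (n - 1)) 1).mp
    apply this
    simpa using h2
  have hgd : ∀ (n : ℕ) (x : ℝ), HasDerivAt (fun y => bb A C n * y ^ n)
      (bb A C n * (n * x ^ (n - 1))) x := fun n x => (hasDerivAt_pow n x).const_mul _
  have hball : ∀ x ∈ Metric.ball (0:ℝ) (5/4), |x| < 5/4 := by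
    intro x hx; simpa [Real.dist_eq] using hx
  have hbound : ∀ (n : ℕ), ∀ x ∈ Metric.ball (0:ℝ) (5/4),
      ‖bb A C n * (n * x ^ (n - 1))‖ ≤ u n := by
    intro n x hx
    have hx' := (hball x hx).le
    have h1 : ‖bb A C n * (n * x ^ (n - 1))‖ = |bb A C n| * ((n:ℝ) * |x| ^ (n - 1)) := by
      rw [norm_mul, norm_mul, norm_pow]
      simp [Real.norm_eq_abs, abs_of_nonneg (Nat.cast_nonneg n : (0:ℝ) ≤ n)]
    rw [h1]
    calc |bb A C n| * ((n:ℝ) * |x| ^ (n - 1))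
        ≤ (2 ^ M * (2 * c) ^ n) * ((n:ℝ) * (5/4) ^ (n - 1)) := by
          apply mul_le_mul (habs n) ?_ (by positivity) (by positivity)
          exact mul_le_mul_of_nonneg_left (pow_le_pow_left₀ (abs_nonneg x) hx' _) (Nat.cast_nonneg n)
      _ ≤ u n := by
          rcases n with _ | m
          · simp [hu]
          · apply le_of_eq
            rw [hu]
            simp only [Nat.add_sub_cancel]
            have h4 : (2*c) ^ m * (5/4 : ℝ) ^ m = (5 * c / 2) ^ m := by
              rw [← mul_pow]; ring_nf
            rw [pow_succ, mul_comm ((2*c) ^ m) (2*c)]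
            push_cast
            calc 2 ^ M * (2 * c * (2 * c) ^ m) * (((m:ℝ)+1) * ((5/4:ℝ)) ^ m)
                = 2 ^ M * (2 * c) * (((m:ℝ)+1) * ((2*c) ^ m * (5/4:ℝ) ^ m)) := by ring
              _ = 2 ^ M * (2 * c) * (((m:ℝ)+1) * (5 * c / 2) ^ m) := by rw [h4]
  -- the sum function and its derivative
  set F : ℝ → ℝ := fun x => ∑' n, bb A C n * x ^ n with hF
  set D : ℝ → ℝ := fun x => ∑' n, bb A C n * ((n:ℝ) * x ^ (n - 1)) with hD
  have h0mem : (0:ℝ) ∈ Metric.ball (0:ℝ) (5/4) := by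
    simp only [Metric.mem_ball, dist_self]; norm_num
  have hder : ∀ x ∈ Metric.ball (0:ℝ) (5/4), HasDerivAt F (D x) x := by
    intro x hx
    exact hasDerivAt_tsum_of_isPreconnected husum Metric.isOpen_ball
      (convex_ball (0:ℝ) (5/4)).isPreconnected (fun n y _ => hgd n y) hbound h0mem
      (hsum_x 0 (by norm_num)) hx
  -- positivity of 1 + C x on the ball
  have hpos : ∀ x ∈ Metric.ball (0:ℝ) (5/4), 0 < 1 + C * x := by
    intro x hx
    have h1 : |C * x| ≤ c * (5/4) := by
      rw [abs_mul]
      exact mul_le_mul hC (hball x hx).le (abs_nonneg x) (le_trans (abs_nonneg C) hC)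
    have := abs_le.1 h1
    nlinarith
  -- the ODE
  have hODE : ∀ x ∈ Metric.ball (0:ℝ) (5/4), (1 + C * x) * D x = A * F x := by
    intro x hx
    have hx' := (hball x hx).le
    have Ds : Summable (fun n => bb A C n * ((n:ℝ) * x ^ (n - 1))) :=
      Summable.of_norm_bounded (g := u) husum (fun n => hbound n x hx)
    have Fs : Summable (fun n => bb A C n * x ^ n) := hsum_x x hx'
    have step1 : D x = ∑' n, bb A C (n + 1) * (((n:ℝ) + 1) * x ^ n) := by
      have h5 := Ds.tsum_eq_zero_add
      simp only [hD]
      rw [h5]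
      simp
    have step2 : ∀ n : ℕ, bb A C (n + 1) * (((n:ℝ) + 1) * x ^ n)
        = A * (bb A C n * x ^ n) - C * (x * (bb A C n * ((n:ℝ) * x ^ (n - 1)))) := by
      intro n
      rcases n with _ | m
      · simp [bb_succ, bb]
      · rw [bb_succ]
        have hm : ((m:ℝ) + 1 + 1) ≠ 0 := by positivity
        simp only [Nat.add_sub_cancel]
        push_cast
        field_simp
        ring
    have step3 : D x = A * F x - C * (x * D x) := by
      calc D x = ∑' n, bb A C (n + 1) * (((n:ℝ) + 1) * x ^ n) := step1
        _ = ∑' n, (A * (bb A C n * x ^ n) - C * (x * (bb A C n * ((n:ℝ) * x ^ (n - 1))))) := by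
            exact tsum_congr step2
        _ = A * F x - C * (x * D x) := by
            rw [Summable.tsum_sub (Fs.mul_left A) ((Ds.mul_left x).mul_left C)]
            simp only [tsum_mul_left, hF, hD]
    linarith [step3]
  -- the primitive G
  set G : ℝ → ℝ := fun x => if C = 0 then x else Real.log (1 + C * x) / C with hG
  have hGder : ∀ x ∈ Metric.ball (0:ℝ) (5/4), HasDerivAt G (1 / (1 + C * x)) x := by
    intro x hx
    by_cases hC0 : C = 0
    · simp only [hG, hC0, if_true]
      have h6 : HasDerivAt (fun y : ℝ => y) 1 x := hasDerivAt_id x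
      convert h6 using 1
      norm_num
    · simp only [hG, hC0, if_false]
      have h1 : HasDerivAt (fun y : ℝ => 1 + C * y) C x := by
        simpa using ((hasDerivAt_id x).const_mul C).const_add 1
      have h2 := (h1.log (ne_of_gt (hpos x hx))).div_const C
      refine HasDerivAt.congr_deriv h2 ?_
      field_simp [hC0, ne_of_gt (hpos x hx)]
  -- the auxiliary constant function
  set h : ℝ → ℝ := fun x => F x * Real.exp (-(A * G x)) with hh
  have hhder : ∀ x ∈ Metric.ball (0:ℝ) (5/4), HasDerivAt h 0 x := by
    intro x hx
    have hd := (hder x hx).mul (((hGder x hx).const_mul A).neg.exp)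
    refine HasDerivAt.congr_deriv (f := h) hd ?_
    have hne := ne_of_gt (hpos x hx)
    have hode := hODE x hx
    have h7 : D x = A * F x / (1 + C * x) := by
      rw [eq_div_iff hne]
      linarith [hode]
    rw [h7]
    field_simp
    ring
  have hsub : Set.Icc (0:ℝ) 1 ⊆ Metric.ball (0:ℝ) (5/4) := by
    intro x hx
    simp only [Metric.mem_ball, Real.dist_eq, sub_zero]
    rw [abs_lt]
    constructor <;> [linarith [hx.1]; linarith [hx.2]]
  have hconst := constant_of_has_deriv_right_zero
    (f := h) (a := 0) (b := 1)
    (fun x hx => ((hhder x (hsub hx)).continuousAt.continuousWithinAt))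
    (fun x hx => ((hhder x (hsub (Set.mem_Icc.2 ⟨hx.1, hx.2.le⟩))).hasDerivWithinAt))
    1 (Set.mem_Icc.2 ⟨zero_le_one, le_refl 1⟩)
  -- evaluate at 0 and 1
  have hF0 : F 0 = 1 := by
    simp only [hF]
    rw [tsum_eq_single 0 ?_]
    · simp [bb]
    · intro n hn
      simp [zero_pow hn]
  have hG0 : G 0 = 0 := by
    rw [hG]
    by_cases hC0 : C = 0 <;> simp [hC0]
  have hh0 : h 0 = 1 := by rw [hh]; simp only []; rw [hF0, hG0]; simp
  have hG1 : G 1 = (if C = 0 then 1 else Real.log (1 + C) / C) := by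
    rw [hG]; by_cases hC0 : C = 0 <;> simp [hC0]
  have hF1 : F 1 = Real.exp (A * (if C = 0 then 1 else Real.log (1 + C) / C)) := by
    have := hconst
    rw [hh0] at this
    simp only [hh] at this
    rw [hG1] at this
    have hexp : Real.exp (-(A * (if C = 0 then 1 else Real.log (1 + C) / C))) ≠ 0 :=
      Real.exp_ne_zero _
    have h2 : F 1 = (Real.exp (-(A * (if C = 0 then 1 else Real.log (1 + C) / C))))⁻¹ := by
      field_simp at this ⊢
      linarith [this]
    rw [h2, ← Real.exp_neg, neg_neg]
  have : Summable (bb A C) := by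
    have := hsum_x 1 (by norm_num)
    simpa using this
  have hFv : F 1 = ∑' n, bb A C n := by
    simp only [hF, one_pow, mul_one]
  rw [hFv] at hF1
  rw [← hF1]
  exact this.hasSum


set_option maxHeartbeats 2000000 in
lemma logBound (C c : ℝ) (hC : |C| ≤ c) (hc3 : c < 1 / 3) (hC0 : C ≠ 0) :
    1 - C / 2 ≤ Real.log (1 + C) / C ∧ Real.log (1 + C) / C ≤ 1 - C / 2 + C ^ 2 / 2 := by
  have habs : |C| < 1 / 3 := lt_of_le_of_lt hC hc3
  have h1 : |(-C)| < 1 := by rw [abs_neg]; linarith [abs_lt.1 habs]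
  have key := Real.abs_log_sub_add_sum_range_le h1 5
  have hsum : (∑ i ∈ range 5, (-C) ^ (i + 1) / (i + 1))
      = -(C - C^2/2 + C^3/3 - C^4/4 + C^5/5) := by
    simp [Finset.sum_range_succ]
    ring
  rw [hsum] at key
  have h2 : (1 : ℝ) - -C = 1 + C := by ring
  rw [h2] at key
  have h3 : |(-C)| ^ (5+1) / (1 - |(-C)|) ≤ (3/2) * C ^ 6 := by
    rw [abs_neg]
    have h4 : |C| ^ 6 = C ^ 6 := by
      rw [← abs_pow]
      exact abs_of_nonneg (by positivity)
    have h5 : (1:ℝ) - |C| ≥ 2/3 := by linarith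
    rw [div_le_iff₀ (by linarith)]
    nlinarith [pow_nonneg (abs_nonneg C) 6, h4]
  have key2 : |Real.log (1 + C) - (C - C^2/2 + C^3/3 - C^4/4 + C^5/5)| ≤ (3/2) * C ^ 6 := by
    have h6 : -(C - C^2/2 + C^3/3 - C^4/4 + C^5/5) + Real.log (1 + C)
        = Real.log (1 + C) - (C - C^2/2 + C^3/3 - C^4/4 + C^5/5) := by ring
    rw [h6] at key
    exact le_trans key h3
  obtain ⟨klo, khi⟩ := abs_le.1 key2
  obtain ⟨hCl, hCu⟩ := abs_lt.1 habs
  rcases lt_or_gt_of_ne hC0 with hneg | hpos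
  · constructor
    · rw [le_div_iff_of_neg hneg]
      nlinarith [mul_pos (mul_pos (neg_pos.2 hneg) (neg_pos.2 hneg)) (neg_pos.2 hneg),
        sq_nonneg C, mul_pos (show (0:ℝ) < 1/3 + C by linarith) (neg_pos.2 hneg)]
    · rw [div_le_iff_of_neg hneg]
      nlinarith [mul_pos (mul_pos (neg_pos.2 hneg) (neg_pos.2 hneg)) (neg_pos.2 hneg),
        sq_nonneg C, mul_pos (show (0:ℝ) < 1/3 + C by linarith) (neg_pos.2 hneg),
        mul_pos (mul_pos (show (0:ℝ) < 1/3 + C by linarith) (neg_pos.2 hneg)) (neg_pos.2 hneg),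
        mul_pos (mul_pos (mul_pos (show (0:ℝ) < 1/3 + C by linarith) (neg_pos.2 hneg)) (neg_pos.2 hneg)) (neg_pos.2 hneg)]
  · constructor
    · rw [le_div_iff₀ hpos]
      nlinarith [mul_pos (mul_pos hpos hpos) hpos, sq_nonneg C,
        mul_pos (show (0:ℝ) < 1/3 - C by linarith) hpos,
        mul_pos (mul_pos (show (0:ℝ) < 1/3 - C by linarith) hpos) hpos,
        mul_pos (mul_pos (mul_pos (show (0:ℝ) < 1/3 - C by linarith) hpos) hpos) hpos]
    · rw [div_le_iff₀ hpos]
      nlinarith [mul_pos (mul_pos hpos hpos) hpos, sq_nonneg C,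
        mul_pos (show (0:ℝ) < 1/3 - C by linarith) hpos,
        mul_pos (mul_pos (show (0:ℝ) < 1/3 - C by linarith) hpos) hpos,
        mul_pos (mul_pos (mul_pos (show (0:ℝ) < 1/3 - C by linarith) hpos) hpos) hpos]

section

variable (M : ℕ) (A C c : ℝ)

lemma tail_le (hg : ∀ n, |bb A C n| ≤ 2 ^ M * (2 * c) ^ n) (hsum : Summable (bb A C))
    (hc0 : 0 < c) (hc3 : c < 1 / 3) (m : ℕ) (hm : M + 2 ≤ m) :
    |∑' k, bb A C (k + m)| ≤ (2 * Real.exp 1 * c) ^ (M + 1) := by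
  have h2c0 : (0:ℝ) ≤ 2 * c := by linarith
  have h2c1 : 2 * c < 1 := by linarith
  have hs : Summable (fun k => bb A C (k + m)) := (summable_nat_add_iff m).2 hsum
  have hgeo : Summable (fun k : ℕ => 2 ^ M * (2*c) ^ m * (2*c) ^ k) :=
    ((summable_geometric_of_lt_one h2c0 h2c1).mul_left _)
  calc |∑' k, bb A C (k + m)| ≤ ∑' k, |bb A C (k + m)| := by
        have := norm_tsum_le_tsum_norm (f := fun k => bb A C (k + m)) (by simpa using hs.abs)
        simpa using this
    _ ≤ ∑' k : ℕ, 2 ^ M * (2*c) ^ m * (2*c) ^ k := by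
        apply Summable.tsum_le_tsum ?_ hs.abs hgeo
        intro k
        calc |bb A C (k + m)| ≤ 2 ^ M * (2*c) ^ (k + m) := hg (k + m)
          _ = 2 ^ M * (2*c) ^ m * (2*c) ^ k := by rw [pow_add]; ring
    _ = 2 ^ M * (2*c) ^ m * (1 - 2*c)⁻¹ := by
        rw [tsum_mul_left, tsum_geometric_of_lt_one h2c0 h2c1]
    _ ≤ (2 * Real.exp 1 * c) ^ (M + 1) := by
        have hinv : (1 - 2*c)⁻¹ ≤ 3 := by
          rw [inv_le_comm₀ (by linarith) (by norm_num)]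
          linarith
        have hmono : 2 ^ M * (2*c) ^ m ≤ 2 ^ M * (2*c) ^ (M + 2) := by
          apply mul_le_mul_of_nonneg_left (pow_le_pow_of_le_one h2c0 h2c1.le hm) (by positivity)
        have hle : 2 ^ M * (2*c) ^ m * (1 - 2*c)⁻¹ ≤ 2 ^ M * (2*c) ^ (M + 2) * 3 := by
          apply mul_le_mul hmono hinv (by rw [inv_nonneg]; linarith) (by positivity)
        refine hle.trans ?_
        have h4 : 2 ^ M * (2*c) ^ (M + 2) * 3 = (3 * c) * (4 * c) ^ (M + 1) := by
          rw [mul_pow, mul_pow, show (4:ℝ) = 2 * 2 by norm_num, mul_pow]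
          ring
        rw [h4]
        have he : (4:ℝ) * c ≤ 2 * Real.exp 1 * c := by
          nlinarith [Real.exp_one_gt_d9]
        calc (3 * c) * (4 * c) ^ (M + 1) ≤ 1 * (2 * Real.exp 1 * c) ^ (M + 1) := by
              apply mul_le_mul (by linarith) (pow_le_pow_left₀ (by positivity) he _) (by positivity) (by norm_num)
          _ = (2 * Real.exp 1 * c) ^ (M + 1) := one_mul _

lemma alt_tail (hA0 : 0 ≤ A) (hC0 : 0 < C) (hCc : C ≤ c) (hc3 : c < 1 / 3) (hc0 : 0 < c)
    (hg : ∀ n, |bb A C n| ≤ 2 ^ M * (2 * c) ^ n) :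
    ∑' m, bb A C (m + (Nat.floor (A / C) + 2)) ≤ 0 := by
  set K := Nat.floor (A / C) with hK
  set s : ℕ → ℝ := fun m => bb A C (m + (K + 2)) with hs
  have hACnn : 0 ≤ A / C := div_nonneg hA0 hC0.le
  -- nonnegativity of bb at K + 1
  have hbase : 0 ≤ bb A C (K + 1) := by
    apply Finset.prod_nonneg
    intro j hj
    have hjK : j ≤ K := by simpa [Nat.lt_succ_iff] using Finset.mem_range.1 hj
    have : (j : ℝ) ≤ A / C := by
      calc (j:ℝ) ≤ (K:ℝ) := by exact_mod_cast hjK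
        _ ≤ A / C := Nat.floor_le hACnn
    have hnum : 0 ≤ A - j * C := by
      rw [sub_nonneg]
      calc (j:ℝ) * C ≤ (A / C) * C := by
            apply mul_le_mul_of_nonneg_right this hC0.le
        _ = A := by field_simp
    positivity
  -- factors beyond K are in [-1, 0]
  have hfac : ∀ i : ℕ, K + 1 ≤ i → (-1 ≤ (A - i * C) / (i + 1) ∧ (A - i * C) / (i + 1) ≤ 0) := by
    intro i hi
    have hip : (0:ℝ) < (i:ℝ) + 1 := by positivity
    have hiC : A < (i:ℝ) * C := by
      have h1 : A / C < (K:ℝ) + 1 := Nat.lt_floor_add_one _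
      have h2 : (K:ℝ) + 1 ≤ (i:ℝ) := by exact_mod_cast hi
      calc A = (A / C) * C := by field_simp
        _ < ((K:ℝ) + 1) * C := by exact mul_lt_mul_of_pos_right h1 hC0
        _ ≤ (i:ℝ) * C := mul_le_mul_of_nonneg_right h2 hC0.le
    constructor
    · rw [le_div_iff₀ hip]
      have : (i:ℝ) * C ≤ (i:ℝ) * 1 := by
        apply mul_le_mul_of_nonneg_left (by linarith) (Nat.cast_nonneg i)
      nlinarith
    · apply div_nonpos_of_nonpos_of_nonneg (by linarith) hip.le
  -- sign pattern
  have hsign : ∀ m : ℕ, 0 ≤ (-1 : ℝ) ^ (m + 1) * s m := by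
    intro m
    induction m with
    | zero =>
      simp only [hs, pow_one, zero_add]
      have hthis : bb A C (K + 2) = bb A C (K + 1) * ((A - ((K+1 : ℕ) : ℝ) * C) / (((K+1:ℕ) : ℝ) + 1)) :=
        bb_succ A C (K + 1)
      rw [hthis]
      have hf0 := hfac (K + 1) (le_refl _)
      nlinarith [hf0.2, hbase]
    | succ m ih =>
      have hstep : s (m + 1) = s m * ((A - (m + (K + 2)) * C) / ((m + (K + 2)) + 1)) := by
        rw [hs]
        simp only []
        have : m + 1 + (K + 2) = (m + (K + 2)) + 1 := by omega
        rw [this, bb_succ]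
        push_cast
        ring_nf
      rw [hstep]
      have hf := hfac (m + (K + 2)) (by omega)
      push_cast at hf
      have h1 : (-1:ℝ) ^ (m + 1 + 1) * (s m * ((A - (↑m + (↑K + 2)) * C) / (↑m + (↑K + 2) + 1)))
          = ((-1:ℝ) ^ (m + 1) * s m) * (-((A - (↑m + (↑K + 2)) * C) / (↑m + (↑K + 2) + 1))) := by
        rw [pow_succ]
        ring
      push_cast
      rw [h1]
      exact mul_nonneg ih (by linarith [hf.2])
  -- magnitudes decrease
  have hmag : ∀ m : ℕ, |s (m + 1)| ≤ |s m| := by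
    intro m
    have hstep : s (m + 1) = s m * ((A - (m + (K + 2)) * C) / ((m + (K + 2)) + 1)) := by
      rw [hs]
      simp only []
      have : m + 1 + (K + 2) = (m + (K + 2)) + 1 := by omega
      rw [this, bb_succ]
      push_cast
      ring_nf
    rw [hstep, abs_mul]
    have hf := hfac (m + (K + 2)) (by omega)
    push_cast at hf
    have : |(A - (↑m + (↑K + 2)) * C) / (↑m + (↑K + 2) + 1)| ≤ 1 := by
      rw [abs_le]
      constructor <;> [linarith [hf.1]; linarith [hf.2]]
    calc |s m| * |(A - (↑m + (↑K + 2)) * C) / (↑m + (↑K + 2) + 1)| ≤ |s m| * 1 :=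
          mul_le_mul_of_nonneg_left this (abs_nonneg _)
      _ = |s m| := mul_one _
  -- summability of even and odd parts
  have h2c0 : (0:ℝ) ≤ 2 * c := by linarith
  have h2c1 : 2 * c < 1 := by linarith
  have hq : (0:ℝ) ≤ (2*c)^2 := by positivity
  have hq1 : ((2*c):ℝ)^2 < 1 := by nlinarith
  have hsE : Summable (fun k => s (2 * k)) := by
    apply Summable.of_norm_bounded (g := fun k => (2 ^ M * (2*c) ^ (K + 2)) * ((2*c)^2) ^ k)
      ((summable_geometric_of_lt_one hq hq1).mul_left _)
    intro k
    rw [Real.norm_eq_abs, hs]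
    calc |bb A C (2*k + (K+2))| ≤ 2 ^ M * (2*c) ^ (2*k + (K+2)) := hg _
      _ = (2 ^ M * (2*c) ^ (K + 2)) * ((2*c)^2) ^ k := by
          rw [pow_add, ← pow_mul]
          ring
  have hsO : Summable (fun k => s (2 * k + 1)) := by
    apply Summable.of_norm_bounded (g := fun k => (2 ^ M * (2*c) ^ (K + 3)) * ((2*c)^2) ^ k)
      ((summable_geometric_of_lt_one hq hq1).mul_left _)
    intro k
    rw [Real.norm_eq_abs, hs]
    calc |bb A C (2*k + 1 + (K+2))| ≤ 2 ^ M * (2*c) ^ (2*k + 1 + (K+2)) := hg _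
      _ = (2 ^ M * (2*c) ^ (K + 3)) * ((2*c)^2) ^ k := by
          rw [show 2*k + 1 + (K+2) = 2*k + (K+3) by omega, pow_add, ← pow_mul]
          ring
  -- pair up
  have hpair : ∀ k : ℕ, s (2 * k) + s (2 * k + 1) ≤ 0 := by
    intro k
    have h1 := hsign (2 * k)
    have h2 : s (2 * k) ≤ 0 := by
      have : (-1:ℝ) ^ (2 * k + 1) = -1 := by
        rw [pow_succ, pow_mul]
        norm_num
      rw [this] at h1
      linarith
    have h3 := hmag (2 * k)
    have h4 : s (2 * k + 1) ≤ |s (2 * k)| := le_trans (le_abs_self _) h3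
    rw [abs_of_nonpos h2] at h4
    linarith
  calc ∑' m, s m = (∑' k, s (2 * k)) + (∑' k, s (2 * k + 1)) := (tsum_even_add_odd hsE hsO).symm
    _ = ∑' k, (s (2 * k) + s (2 * k + 1)) := (Summable.tsum_add hsE hsO).symm
    _ ≤ 0 := tsum_nonpos hpair

end




set_option maxHeartbeats 1000000 in
open Finset Real in
/-- Summation lemma (Corollary 4.5 of Greenhill–McKay–Wang).  With `n_0 = 1` and
`n_i/n_{i−1} = (A(i)/i)(1 − (i−1)B(i))` for `1 ≤ i ≤ N`, where `A(i) ≥ 0`,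
`1 − (i−1)B(i) ≥ 0`, `A_1,A_2` the min/max of `A(i)`, `C_1,C_2` the min/max of `A(i)B(i)`,
and `max{A/N, |C|} ≤ ĉ < 1/3` on the corresponding intervals, the sum `∑_{i=0}^N n_i` lies
between `exp(A_1 − A_1C_2/2) − (2eĉ)^N` and `exp(A_2 − A_2C_1/2 + A_2C_1²/2) + (2eĉ)^N`. -/
theorem stmt_15 (N : ℕ) (hN : 2 ≤ N) (A B : ℕ → ℝ)
    (hA : ∀ i ∈ Icc 1 N, 0 ≤ A i)
    (hB : ∀ i ∈ Icc 1 N, 0 ≤ 1 - ((i : ℝ) - 1) * B i)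
    (A₁ A₂ C₁ C₂ : ℝ)
    (hA₁ : (∀ i ∈ Icc 1 N, A₁ ≤ A i) ∧ ∃ i ∈ Icc 1 N, A i = A₁)
    (hA₂ : (∀ i ∈ Icc 1 N, A i ≤ A₂) ∧ ∃ i ∈ Icc 1 N, A i = A₂)
    (hC₁ : (∀ i ∈ Icc 1 N, C₁ ≤ A i * B i) ∧ ∃ i ∈ Icc 1 N, A i * B i = C₁)
    (hC₂ : (∀ i ∈ Icc 1 N, A i * B i ≤ C₂) ∧ ∃ i ∈ Icc 1 N, A i * B i = C₂)
    (c : ℝ) (hc0 : 0 < c) (hc3 : c < 1 / 3)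
    (hbound : ∀ a ∈ Set.Icc A₁ A₂, ∀ C ∈ Set.Icc C₁ C₂, a / N ≤ c ∧ |C| ≤ c)
    (n : ℕ → ℝ) (hn0 : n 0 = 1)
    (hn : ∀ i ∈ Icc 1 N, n i = n (i - 1) * (A i / i * (1 - ((i : ℝ) - 1) * B i))) :
    exp (A₁ - A₁ * C₂ / 2) - (2 * exp 1 * c) ^ N ≤ ∑ i ∈ range (N + 1), n i ∧
      ∑ i ∈ range (N + 1), n i ≤
        exp (A₂ - A₂ * C₁ / 2 + A₂ * C₁ ^ 2 / 2) + (2 * exp 1 * c) ^ N := by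

  obtain ⟨i₁, hi₁, hAi₁⟩ := hA₁.2
  obtain ⟨i₂, hi₂, hAi₂⟩ := hA₂.2
  obtain ⟨i₄, hi₄, hCi₄⟩ := hC₂.2
  have hA₁0 : 0 ≤ A₁ := hAi₁ ▸ hA i₁ hi₁
  have hA₂0 : 0 ≤ A₂ := hAi₂ ▸ hA i₂ hi₂
  have hA12 : A₁ ≤ A₂ := hAi₂ ▸ hA₁.1 i₂ hi₂
  have hC12 : C₁ ≤ C₂ := hCi₄ ▸ hC₁.1 i₄ hi₄
  have hA₁m : A₁ ∈ Set.Icc A₁ A₂ := ⟨le_rfl, hA12⟩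
  have hA₂m : A₂ ∈ Set.Icc A₁ A₂ := ⟨hA12, le_rfl⟩
  have hC₁m : C₁ ∈ Set.Icc C₁ C₂ := ⟨le_rfl, hC12⟩
  have hC₂m : C₂ ∈ Set.Icc C₁ C₂ := ⟨hC12, le_rfl⟩
  have hNpos : (0:ℝ) < N := by
    have : (0:ℕ) < N := by omega
    exact_mod_cast this
  have hC₁c : |C₁| ≤ c := (hbound A₁ hA₁m C₁ hC₁m).2
  have hC₂c : |C₂| ≤ c := (hbound A₁ hA₁m C₂ hC₂m).2
  have hA₂N : A₂ ≤ c * N := by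
    have := (hbound A₂ hA₂m C₁ hC₁m).1
    rw [div_le_iff₀ hNpos] at this
    linarith
  have hA₁N : A₁ ≤ c * N := le_trans hA12 hA₂N
  obtain ⟨M, rfl⟩ : ∃ M, N = M + 1 := ⟨N - 1, by omega⟩
  have hA₂M : A₂ ≤ c * ((M:ℝ) + 1) := by
    refine le_trans hA₂N (le_of_eq ?_)
    push_cast
    ring
  have hA₁M : A₁ ≤ c * ((M:ℝ) + 1) := le_trans hA12 hA₂M
  -- product formula for n
  have hnf : ∀ i, i ≤ M + 1 →
      n i = ∏ j ∈ range i, (A (j+1) * (1 - (j:ℝ) * B (j+1)) / ((j:ℝ) + 1)) := by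
    intro i
    induction i with
    | zero => intro _; simpa using hn0
    | succ m ih =>
      intro hm
      have hmem : m + 1 ∈ Icc 1 (M+1) := by
        simp only [Finset.mem_Icc]
        omega
      have h1 := hn (m+1) hmem
      rw [Nat.add_sub_cancel] at h1
      rw [h1, ih (by omega), Finset.prod_range_succ]
      push_cast
      ring
  have hmemj : ∀ j, j < M + 1 → (j+1) ∈ Icc 1 (M+1) := by
    intro j hj
    simp only [Finset.mem_Icc]
    omega
  have hBj : ∀ j, j < M + 1 → 0 ≤ 1 - (j:ℝ) * B (j+1) := by
    intro j hj
    have h := hB (j+1) (hmemj j hj)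
    push_cast at h
    have h2 : ((j:ℝ) + 1 - 1) = (j:ℝ) := by ring
    rw [h2] at h
    exact h
  have hterm0 : ∀ j, j < M + 1 → 0 ≤ A (j+1) * (1 - (j:ℝ) * B (j+1)) / ((j:ℝ) + 1) := by
    intro j hj
    exact div_nonneg (mul_nonneg (hA (j+1) (hmemj j hj)) (hBj j hj)) (by positivity)
  have htermU : ∀ j, j < M + 1 →
      A (j+1) * (1 - (j:ℝ) * B (j+1)) / ((j:ℝ) + 1) ≤ (A₂ - (j:ℝ) * C₁) / ((j:ℝ) + 1) := by
    intro j hj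
    apply div_le_div_of_nonneg_right ?_ (by positivity)
    have hAj2 := hA₂.1 (j+1) (hmemj j hj)
    have hCj1 := hC₁.1 (j+1) (hmemj j hj)
    have hj0 : (0:ℝ) ≤ (j:ℝ) := Nat.cast_nonneg j
    nlinarith [mul_le_mul_of_nonneg_left hCj1 hj0]
  have htermL : ∀ j, j < M + 1 →
      (A₁ - (j:ℝ) * C₂) / ((j:ℝ) + 1) ≤ A (j+1) * (1 - (j:ℝ) * B (j+1)) / ((j:ℝ) + 1) := by
    intro j hj
    apply div_le_div_of_nonneg_right ?_ (by positivity)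
    have hAj1 := hA₁.1 (j+1) (hmemj j hj)
    have hCj2 := hC₂.1 (j+1) (hmemj j hj)
    have hj0 : (0:ℝ) ≤ (j:ℝ) := Nat.cast_nonneg j
    nlinarith [mul_le_mul_of_nonneg_left hCj2 hj0]
  have hnn : ∀ i, i ≤ M + 1 → 0 ≤ n i := by
    intro i hi
    rw [hnf i hi]
    exact Finset.prod_nonneg fun j hj =>
      hterm0 j (lt_of_lt_of_le (Finset.mem_range.1 hj) hi)
  have hUP : ∀ i, i ≤ M + 1 → n i ≤ bb A₂ C₁ i := by
    intro i hi
    rw [hnf i hi, bb]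
    exact Finset.prod_le_prod
      (fun j hj => hterm0 j (lt_of_lt_of_le (Finset.mem_range.1 hj) hi))
      (fun j hj => htermU j (lt_of_lt_of_le (Finset.mem_range.1 hj) hi))
  -- series facts
  have habsU := bb_abs_le M A₂ C₁ c hA₂0 hA₂M hC₁c hc0.le
  have habsL := bb_abs_le M A₁ C₂ c hA₁0 hA₁M hC₂c hc0.le
  have hcoreU := core M A₂ C₁ c hA₂0 hA₂M hC₁c hc0 hc3
  have hcoreL := core M A₁ C₂ c hA₁0 hA₁M hC₂c hc0 hc3
  have hSU : Summable (bb A₂ C₁) := hcoreU.summable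
  have hSL : Summable (bb A₁ C₂) := hcoreL.summable
  have hvalU : ∑' k, bb A₂ C₁ k ≤ exp (A₂ - A₂ * C₁ / 2 + A₂ * C₁ ^ 2 / 2) := by
    rw [hcoreU.tsum_eq]
    apply Real.exp_le_exp.2
    by_cases h0 : C₁ = 0
    · simp [h0]
    · rw [if_neg h0]
      have hl := (logBound C₁ c hC₁c hc3 h0).2
      nlinarith [mul_le_mul_of_nonneg_left hl hA₂0]
  have hvalL : exp (A₁ - A₁ * C₂ / 2) ≤ ∑' k, bb A₁ C₂ k := by
    rw [hcoreL.tsum_eq]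
    apply Real.exp_le_exp.2
    by_cases h0 : C₂ = 0
    · simp [h0]
    · rw [if_neg h0]
      have hl := (logBound C₂ c hC₂c hc3 h0).1
      nlinarith [mul_le_mul_of_nonneg_left hl hA₁0]
  have htailU := tail_le M A₂ C₁ c habsU hSU hc0 hc3 (M + 1 + 1) (by omega)
  have htailL := tail_le M A₁ C₂ c habsL hSL hc0 hc3 (M + 1 + 1) (by omega)
  have hpow : (0:ℝ) < (2 * exp 1 * c) ^ (M + 1) := by positivity
  constructor
  · -- lower bound
    by_cases hbad : 0 < C₂ ∧ A₁ < ((M:ℝ) + 1 - 1) * C₂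
    · obtain ⟨hC₂pos, hA₁lt⟩ := hbad
      set K := Nat.floor (A₁ / C₂) with hK
      have hKle : (K:ℝ) ≤ A₁ / C₂ := Nat.floor_le (div_nonneg hA₁0 hC₂pos.le)
      have hKlt : A₁ / C₂ < (M:ℝ) := by
        rw [div_lt_iff₀ hC₂pos]
        nlinarith
      have hKM : K + 2 ≤ M + 1 := by
        have h5 : (K:ℝ) < (M:ℝ) := lt_of_le_of_lt hKle hKlt
        have h6 : K < M := by exact_mod_cast h5
        omega
      have hfacL : ∀ j, j < K + 1 → 0 ≤ A₁ - (j:ℝ) * C₂ := by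
        intro j hj
        have h7 : (j:ℝ) ≤ (K:ℝ) := by exact_mod_cast Nat.lt_succ_iff.1 hj
        have h8 : (j:ℝ) * C₂ ≤ (A₁ / C₂) * C₂ :=
          mul_le_mul_of_nonneg_right (le_trans h7 hKle) hC₂pos.le
        rw [div_mul_cancel₀ _ (ne_of_gt hC₂pos)] at h8
        linarith
      have hLP : ∀ i, i ≤ K + 1 → bb A₁ C₂ i ≤ n i := by
        intro i hi
        rw [hnf i (by omega), bb]
        apply Finset.prod_le_prod
        · intro j hj
          exact div_nonneg (hfacL j (lt_of_lt_of_le (Finset.mem_range.1 hj) hi)) (by positivity)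
        · intro j hj
          have := Finset.mem_range.1 hj
          exact htermL j (by omega)
      have halt := alt_tail M A₁ C₂ c hA₁0 hC₂pos (le_trans (le_abs_self C₂) hC₂c) hc3 hc0 habsL
      rw [← hK] at halt
      have hsplitK := Summable.sum_add_tsum_nat_add (f := bb A₁ C₂) (K + 2) hSL
      have hterm : ∑ i ∈ range (K + 2), bb A₁ C₂ i ≤ ∑ i ∈ range (K + 2), n i := by
        apply Finset.sum_le_sum
        intro i hi
        have := Finset.mem_range.1 hi
        exact hLP i (by omega)
      have hsub : ∑ i ∈ range (K + 2), n i ≤ ∑ i ∈ range (M + 1 + 1), n i := by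
        apply Finset.sum_le_sum_of_subset_of_nonneg
        · exact Finset.range_subset_range.2 (by omega)
        · intro i hi _
          have := Finset.mem_range.1 hi
          exact hnn i (by omega)
      linarith [hvalL, hpow]
    · push_neg at hbad
      have hfacL : ∀ j, j < M + 1 → 0 ≤ A₁ - (j:ℝ) * C₂ := by
        intro j hj
        rcases le_or_gt C₂ 0 with h | h
        · nlinarith [mul_nonneg (Nat.cast_nonneg (α := ℝ) j) (neg_nonneg.2 h)]
        · have h6 := hbad h
          have h7 : (j:ℝ) ≤ (M:ℝ) + 1 - 1 := by
            have : (j:ℝ) ≤ (M:ℝ) := by exact_mod_cast Nat.lt_succ_iff.1 hj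
            linarith
          nlinarith [mul_le_mul_of_nonneg_right h7 h.le]
      have hLP : ∀ i, i ≤ M + 1 → bb A₁ C₂ i ≤ n i := by
        intro i hi
        rw [hnf i hi, bb]
        apply Finset.prod_le_prod
        · intro j hj
          exact div_nonneg (hfacL j (lt_of_lt_of_le (Finset.mem_range.1 hj) hi)) (by positivity)
        · intro j hj
          exact htermL j (lt_of_lt_of_le (Finset.mem_range.1 hj) hi)
      have hterm : ∑ i ∈ range (M + 1 + 1), bb A₁ C₂ i ≤ ∑ i ∈ range (M + 1 + 1), n i := by
        apply Finset.sum_le_sum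
        intro i hi
        have := Finset.mem_range.1 hi
        exact hLP i (by omega)
      have hsplitL := Summable.sum_add_tsum_nat_add (f := bb A₁ C₂) (M + 1 + 1) hSL
      have h2 : ∑' i, bb A₁ C₂ (i + (M + 1 + 1)) ≤ (2 * exp 1 * c) ^ (M + 1) :=
        le_trans (le_abs_self _) htailL
      linarith [hvalL]
  · -- upper bound
    have hUsum : ∑ i ∈ range (M + 1 + 1), n i ≤ ∑ i ∈ range (M + 1 + 1), bb A₂ C₁ i := by
      apply Finset.sum_le_sum
      intro i hi
      have := Finset.mem_range.1 hi
      exact hUP i (by omega)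
    have hsplitU := Summable.sum_add_tsum_nat_add (f := bb A₂ C₁) (M + 1 + 1) hSU
    have h2 : -(2 * exp 1 * c) ^ (M + 1) ≤ ∑' i, bb A₂ C₁ (i + (M + 1 + 1)) :=
      neg_le_of_abs_le htailU
    linarith [hvalU]
end

section
/- Let a uniformly random m×n nonnegative integer matrix with entries summing to S be given (uniform over all binom(mn+S−1,S) such matrices), and let s_i denote its i-th row sum. Define μ̂_2 = (mn/(S(mn+S)))·∑_{i=1}^m (s_i − S/m)^2. Then E[μ̂_2] = n(m−1)/(mn+1). -/
open Finset
set_option maxHeartbeats 1600000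

lemma aux18_hsb (c : ℕ) : ∀ n : ℕ, ∑ b ∈ range (n+1), (b + c - 1).choose b = (n + c).choose n
  | 0 => by simp
  | (n+1) => by
    rw [sum_range_succ, aux18_hsb c n]
    have h1 : n + 1 + c - 1 = n + c := by omega
    have h2 : n + 1 + c = (n + c) + 1 := by omega
    rw [h1, h2, Nat.choose_succ_succ]

lemma aux18_hsd (d : ℕ) : ∀ n : ℕ, ∑ b ∈ range (n+1), (b + d).choose d = (n + d + 1).choose (d+1)
  | 0 => by simp
  | (n+1) => by
    rw [sum_range_succ, aux18_hsd d n]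
    have h1 : n + 1 + d = n + d + 1 := by omega
    rw [h1]
    have p := Nat.choose_succ_succ' (n + d + 1) d
    omega

lemma aux18_e1 (d : ℕ) : ∀ n : ℕ, ∑ a ∈ range (n+1), a * (n - a + d).choose d = (n + d + 1).choose (d+2)
  | 0 => by simp [Nat.choose_eq_zero_of_lt]
  | (n+1) => by
    rw [sum_range_succ']
    simp only [Nat.zero_eq, zero_mul, add_zero, Nat.succ_sub_succ]
    have hre : ∑ i ∈ range (n+1), (i+1) * (n - i + d).choose d
        = (∑ a ∈ range (n+1), a * (n - a + d).choose d) + ∑ a ∈ range (n+1), (n - a + d).choose d := by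
      rw [← sum_add_distrib]
      exact sum_congr rfl fun i _ => by ring
    rw [hre, aux18_e1 d n]
    have hrefl : ∑ a ∈ range (n+1), (n - a + d).choose d = ∑ b ∈ range (n+1), (b + d).choose d := by
      have := Finset.sum_range_reflect (fun b => (b + d).choose d) (n+1)
      simpa using this
    rw [hrefl, aux18_hsd d n]
    have h1 : n + 1 + d + 1 = n + d + 2 := by omega
    rw [h1]
    have p : (n + d + 2).choose (d + 2) = (n+d+1).choose (d+1) + (n+d+1).choose (d+2) :=
      Nat.choose_succ_succ' (n+d+1) (d+1)
    omega

lemma aux18_e2 (d : ℕ) : ∀ n : ℕ, ∑ a ∈ range (n+1), a^2 * (n - a + d).choose d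
    = 2 * (n + d + 1).choose (d+3) + (n + d + 1).choose (d+2)
  | 0 => by simp [Nat.choose_eq_zero_of_lt]
  | (n+1) => by
    rw [sum_range_succ']
    simp only [Nat.zero_eq, add_zero, Nat.succ_sub_succ]
    have hre : ∑ i ∈ range (n+1), (i+1)^2 * (n - i + d).choose d
        = (∑ a ∈ range (n+1), a^2 * (n - a + d).choose d)
          + 2 * (∑ a ∈ range (n+1), a * (n - a + d).choose d)
          + ∑ a ∈ range (n+1), (n - a + d).choose d := by
      rw [mul_sum, ← sum_add_distrib, ← sum_add_distrib]
      exact sum_congr rfl fun i _ => by ring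
    rw [hre, aux18_e2 d n, aux18_e1 d n]
    have hrefl : ∑ a ∈ range (n+1), (n - a + d).choose d = ∑ b ∈ range (n+1), (b + d).choose d := by
      have := Finset.sum_range_reflect (fun b => (b + d).choose d) (n+1)
      simpa using this
    rw [hrefl, aux18_hsd d n]
    have h1 : n + 1 + d + 1 = n + d + 2 := by omega
    rw [h1]
    have p1 : (n + d + 2).choose (d + 3) = (n+d+1).choose (d+2) + (n+d+1).choose (d+3) :=
      Nat.choose_succ_succ' (n+d+1) (d+2)
    have p2 : (n + d + 2).choose (d + 2) = (n+d+1).choose (d+1) + (n+d+1).choose (d+2) :=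
      Nat.choose_succ_succ' (n+d+1) (d+1)
    omega



lemma aux18_card {ι : Type*} [DecidableEq ι] (s : Finset ι) (n : ℕ) :
    (s.piAntidiag n).card = (n + s.card - 1).choose n := by
  induction s using Finset.cons_induction generalizing n with
  | empty =>
    rcases n with _ | n
    · simp
    · rw [piAntidiag_empty_of_ne_zero (Nat.succ_ne_zero n)]
      simp [Nat.choose_eq_zero_of_lt (by omega : n + 1 + 0 - 1 < n + 1)]
  | cons i s hi ih =>
    rw [piAntidiag_cons hi, card_disjiUnion]
    simp only [card_map, ih]
    rw [Finset.Nat.sum_antidiagonal_eq_sum_range_succ (fun a b => (b + s.card - 1).choose b)]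
    have hrefl := Finset.sum_range_reflect (fun b => (b + s.card - 1).choose b) (n+1)
    simp only [Nat.add_sub_cancel] at hrefl
    calc ∑ k ∈ range (n+1), (n - k + s.card - 1).choose (n - k)
        = ∑ b ∈ range (n+1), (b + s.card - 1).choose b := by
          exact hrefl
      _ = (n + s.card).choose n := aux18_hsb s.card n
      _ = (n + (cons i s hi).card - 1).choose n := by
          rw [card_cons, show n + (s.card + 1) - 1 = n + s.card from by omega]

lemma aux18_moment {ι : Type*} [DecidableEq ι] {i : ι} {s : Finset ι} (hi : i ∉ s)
    (g : ℕ → ℕ) (n : ℕ) :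
    ∑ f ∈ piAntidiag (cons i s hi) n, g (f i) =
      ∑ p ∈ antidiagonal n, g p.1 * (p.2 + s.card - 1).choose p.2 := by
  rw [piAntidiag_cons hi, sum_disjiUnion]
  refine sum_congr rfl fun p hp => ?_
  rw [sum_map]
  have key : ∀ f ∈ s.piAntidiag p.2,
      g ((addRightEmbedding fun t => if t = i then p.1 else 0) f i) = g p.1 := by
    intro f hf
    rw [mem_piAntidiag] at hf
    have hfi : f i = 0 := by
      by_contra h
      exact hi (hf.2 i h)
    simp [addRightEmbedding_apply, hfi]
  rw [sum_congr rfl key, sum_const, aux18_card, smul_eq_mul, mul_comm]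



section
variable {ι : Type*} [Fintype ι] [DecidableEq ι]

lemma aux18_univ_cons (c : ι) : (univ : Finset ι) = cons c (univ.erase c) (notMem_erase c univ) := by
  rw [cons_eq_insert, insert_erase (mem_univ c)]

lemma aux18_sq (c : ι) (S : ℕ) (h2 : 2 ≤ Fintype.card ι) :
    ∑ f ∈ piAntidiag (univ : Finset ι) S, (f c)^2
      = 2 * (S + Fintype.card ι - 1).choose (Fintype.card ι + 1)
        + (S + Fintype.card ι - 1).choose (Fintype.card ι) := by
  obtain ⟨d, hd⟩ : ∃ d, Fintype.card ι = d + 2 := ⟨Fintype.card ι - 2, by omega⟩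
  have H := aux18_moment (notMem_erase c univ) (fun k => k^2) S
  rw [← aux18_univ_cons c] at H
  rw [H]
  clear H
  have hcard : (univ.erase c).card = d + 1 := by
    rw [card_erase_of_mem (mem_univ c), card_univ, hd]
    omega

  rw [hcard, Finset.Nat.sum_antidiagonal_eq_sum_range_succ_mk]
  have step : ∀ a ∈ range (S+1),
      (a, S - a).1 ^ 2 * ((a, S - a).2 + (d+1) - 1).choose (a, S - a).2
        = a^2 * ((S - a) + d).choose d := by
    intro a ha
    simp only
    have h1 : (S - a) + (d+1) - 1 = (S - a) + d := by omega
    rw [h1]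
    congr 1
    have := Nat.choose_symm (Nat.le_add_left d (S - a)) (n := (S - a) + d)
    simpa [Nat.add_sub_cancel] using this
  rw [sum_congr rfl step, aux18_e2 d S, hd]
  have h1 : S + (d + 2) - 1 = S + d + 1 := by omega
  rw [h1]

lemma aux18_perm (S : ℕ) (σ : Equiv.Perm ι) (g : (ι → ℕ) → ℕ) :
    ∑ f ∈ piAntidiag (univ : Finset ι) S, g (f ∘ σ)
      = ∑ f ∈ piAntidiag (univ : Finset ι) S, g f := by
  apply Finset.sum_nbij' (fun f => f ∘ σ) (fun f => f ∘ σ.symm)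
  · intro f hf
    rw [mem_piAntidiag] at hf ⊢
    refine ⟨?_, by simp⟩
    rw [← hf.1]
    exact Equiv.sum_comp σ f
  · intro f hf
    rw [mem_piAntidiag] at hf ⊢
    refine ⟨?_, by simp⟩
    rw [← hf.1]
    exact Equiv.sum_comp σ.symm f
  · intro f _; ext j; simp
  · intro f _; ext j; simp
  · intro f _; rfl

lemma aux18_pairsym (S : ℕ) {c c' d d' : ι} (hcc : c ≠ c') (hdd : d ≠ d') :
    ∑ f ∈ piAntidiag (univ : Finset ι) S, f c * f c'
      = ∑ f ∈ piAntidiag (univ : Finset ι) S, f d * f d' := by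
  classical
  set e1 := Equiv.swap c d with he1
  set c'' := e1 c' with hc''
  have h1 : c'' ≠ d := by
    intro h
    apply hcc
    apply e1.injective
    rw [← hc''] at *
    rw [h, he1, Equiv.swap_apply_left]
  set σ := e1.trans (Equiv.swap c'' d') with hσ
  have hσc : σ c = d := by
    rw [hσ]
    simp only [Equiv.trans_apply, he1, Equiv.swap_apply_left]
    exact Equiv.swap_apply_of_ne_of_ne (Ne.symm h1) hdd
  have hσc' : σ c' = d' := by
    rw [hσ]
    simp only [Equiv.trans_apply, ← hc'']
    exact Equiv.swap_apply_left c'' d'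
  have H := aux18_perm S σ (fun f => f c * f c')
  simp only [Function.comp_apply, hσc, hσc'] at H
  exact H.symm

end


section
variable {ι : Type*} [Fintype ι] [DecidableEq ι]

lemma aux18_all_pairs (S : ℕ) {c0 c0' : ι} (h : c0 ≠ c0') (h2 : 2 ≤ Fintype.card ι) :
    S^2 * (piAntidiag (univ : Finset ι) S).card
      = Fintype.card ι * ((∑ f ∈ piAntidiag (univ : Finset ι) S, (f c0)^2)
          + (Fintype.card ι - 1) * ∑ f ∈ piAntidiag (univ : Finset ι) S, f c0 * f c0') := by
  have h1 : ∀ f ∈ piAntidiag (univ : Finset ι) S, (∑ c, f c) * (∑ c', f c') = S^2 := by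
    intro f hf
    rw [mem_piAntidiag] at hf
    rw [hf.1, sq]
  have h2' : S^2 * (piAntidiag (univ : Finset ι) S).card
      = ∑ f ∈ piAntidiag (univ : Finset ι) S, (∑ c, f c) * (∑ c', f c') := by
    rw [sum_congr rfl h1, sum_const, smul_eq_mul, mul_comm]
  rw [h2']
  have h3 : ∀ f ∈ piAntidiag (univ : Finset ι) S,
      (∑ c, f c) * (∑ c', f c') = ∑ c, ∑ c', f c * f c' := by
    intro f _
    rw [Finset.sum_mul_sum]
  rw [sum_congr rfl h3, Finset.sum_comm]
  have h4 : ∀ c : ι, ∑ f ∈ piAntidiag (univ : Finset ι) S, ∑ c', f c * f c'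
      = ∑ c' : ι, ∑ f ∈ piAntidiag (univ : Finset ι) S, f c * f c' := fun c => Finset.sum_comm
  rw [sum_congr rfl (fun c _ => h4 c)]
  have h5 : ∀ c : ι, ∑ c' : ι, ∑ f ∈ piAntidiag (univ : Finset ι) S, f c * f c'
      = (∑ f ∈ piAntidiag (univ : Finset ι) S, (f c0)^2)
        + (Fintype.card ι - 1) * ∑ f ∈ piAntidiag (univ : Finset ι) S, f c0 * f c0' := by
    intro c
    rw [← Finset.add_sum_erase _ _ (mem_univ c)]
    congr 1
    · rw [sum_congr rfl (fun f _ => (sq (f c)).symm), aux18_sq c S h2, aux18_sq c0 S h2]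
    · rw [sum_congr rfl (fun c' hc' => aux18_pairsym S (Ne.symm (mem_erase.mp hc').1) h),
        sum_const, card_erase_of_mem (mem_univ c), card_univ, smul_eq_mul]
  rw [sum_congr rfl (fun c _ => h5 c), sum_const, card_univ, smul_eq_mul]

lemma aux18_rows (m n S : ℕ) {c0 c0' : Fin m × Fin n} (h : c0 ≠ c0')
    (h2 : 2 ≤ Fintype.card (Fin m × Fin n)) :
    ∑ f ∈ piAntidiag (univ : Finset (Fin m × Fin n)) S, ∑ i, (∑ j, f (i,j))^2
      = m * n * ((∑ f ∈ piAntidiag (univ : Finset (Fin m × Fin n)) S, (f c0)^2)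
          + (n-1) * ∑ f ∈ piAntidiag (univ : Finset (Fin m × Fin n)) S, f c0 * f c0') := by
  set P := piAntidiag (univ : Finset (Fin m × Fin n)) S with hP
  have expand : ∀ f ∈ P, ∑ i, (∑ j, f (i,j))^2 = ∑ i, ∑ j, ∑ j', f (i,j) * f (i,j') := by
    intro f _
    exact sum_congr rfl fun i _ => by rw [sq, Finset.sum_mul_sum]
  rw [sum_congr rfl expand, Finset.sum_comm]
  have swap2 : ∀ i : Fin m, ∑ f ∈ P, ∑ j, ∑ j', f (i,j) * f (i,j')
      = ∑ j : Fin n, ∑ j' : Fin n, ∑ f ∈ P, f (i,j) * f (i,j') := by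
    intro i
    rw [Finset.sum_comm]
    exact sum_congr rfl fun j _ => Finset.sum_comm
  rw [sum_congr rfl (fun i _ => swap2 i)]
  have inner : ∀ (i : Fin m) (j : Fin n), ∑ j' : Fin n, ∑ f ∈ P, f (i,j) * f (i,j')
      = (∑ f ∈ P, (f c0)^2) + (n-1) * (∑ f ∈ P, f c0 * f c0') := by
    intro i j
    rw [← Finset.add_sum_erase _ _ (mem_univ j)]
    congr 1
    · rw [sum_congr rfl (fun f _ => (sq (f (i,j))).symm), aux18_sq (i,j) S h2, aux18_sq c0 S h2]
    · have hne : ∀ j' ∈ univ.erase j, (i,j) ≠ ((i,j') : Fin m × Fin n) := by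
        intro j' hj'
        intro hcontra
        exact (mem_erase.mp hj').1 (congrArg Prod.snd hcontra).symm
      rw [sum_congr rfl (fun j' hj' => aux18_pairsym S (hne j' hj') h),
        sum_const, card_erase_of_mem (mem_univ j), card_univ, Fintype.card_fin, smul_eq_mul]
  rw [sum_congr rfl (fun i _ => sum_congr rfl (fun j _ => inner i j))]
  rw [sum_const, sum_const, card_univ, card_univ, Fintype.card_fin, Fintype.card_fin,
    smul_eq_mul, smul_eq_mul, ← mul_assoc]
end

lemma aux18_chi1 (T S : ℕ) (hT : 1 ≤ T) (hS : 1 ≤ S) :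
    (S + T - 1).choose S * S = (S + T - 1).choose T * T := by
  have e1 := Nat.choose_succ_right_eq (S + T - 1) (S - 1)
  rw [show S - 1 + 1 = S from by omega, show S + T - 1 - (S-1) = T from by omega] at e1
  have e2 := Nat.choose_symm (show T ≤ S + T - 1 from by omega)
  rw [show S + T - 1 - T = S - 1 from by omega] at e2
  rw [e1, e2]

lemma aux18_chi2 (T S : ℕ) (hT : 1 ≤ T) (hS : 1 ≤ S) :
    (S + T - 1).choose T * (S - 1) = (S + T - 1).choose (T + 1) * (T + 1) := by
  by_cases hS1 : S = 1
  · subst hS1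
    rw [show (1:ℕ) - 1 = 0 from rfl, mul_zero,
      Nat.choose_eq_zero_of_lt (by omega), zero_mul]
  · have hS2 : 2 ≤ S := by omega
    have e1 := Nat.choose_succ_right_eq (S + T - 1) (S - 2)
    rw [show S - 2 + 1 = S - 1 from by omega,
      show S + T - 1 - (S-2) = T + 1 from by omega] at e1
    have e2 := Nat.choose_symm (show T ≤ S + T - 1 from by omega)
    rw [show S + T - 1 - T = S - 1 from by omega] at e2
    have e3 := Nat.choose_symm (show T + 1 ≤ S + T - 1 from by omega)
    rw [show S + T - 1 - (T + 1) = S - 2 from by omega] at e3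
    rw [← e2, ← e3, e1]


lemma aux18_final (m n S A B N K1 K2 : ℝ)
    (hm0 : m ≠ 0) (hn0 : n ≠ 0) (hS0 : S ≠ 0)
    (hmn1 : m*n - 1 ≠ 0) (hmnp1 : m*n + 1 ≠ 0) (hmnS : m*n + S ≠ 0) (hN0 : N ≠ 0)
    (r1 : N * S = K1 * (m*n)) (r2 : K1*(S-1) = K2*(m*n+1)) (r3 : A = 2*K2 + K1)
    (r4 : S^2*N = m*n*(A + (m*n-1)*B)) :
    m * n / (S * (m * n + S)) * (m * n * (A + (n - 1) * B) - N * (S ^ 2 / m)) / N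
      = n * (m - 1) / (m * n + 1) := by
  have hmn0 : m*n ≠ 0 := mul_ne_zero hm0 hn0
  have hK1r : K1 = S*N/(m*n) := by
    rw [eq_div_iff hmn0]
    linarith [r1]
  have hK2r : K2 = (S-1)*S*N/((m*n)*(m*n+1)) := by
    rw [eq_div_iff (mul_ne_zero hmn0 hmnp1)]
    linear_combination (-(m*n))*r2 - (S-1)*r1
  have hAr : A = 2*((S-1)*S*N/((m*n)*(m*n+1))) + S*N/(m*n) := by rw [r3, hK1r, hK2r]
  have hBr : B = (S^2*N - m*n*A)/((m*n)*(m*n - 1)) := by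
    rw [eq_div_iff (mul_ne_zero hmn0 hmn1)]
    linear_combination -r4
  rw [hBr, hAr]
  field_simp
  ring

open Finset in
/-- For a uniformly random `m×n` nonnegative integer matrix with entries summing to `S`,
with `s_i` its row sums and `μ̂₂ = (mn/(S(mn+S)))·∑_i (s_i − S/m)²`, we have
`E[μ̂₂] = n(m−1)/(mn+1)`. -/
theorem stmt_18 (m n S : ℕ) (hm : 0 < m) (hn : 0 < n) (hS : 0 < S) :
    (∑ Q ∈ univ.filter (fun Q : Matrix (Fin m) (Fin n) (Fin (S + 1)) =>
          ∑ i, ∑ j, (Q i j : ℕ) = S),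
        ((m : ℝ) * n / ((S : ℝ) * ((m : ℝ) * n + S)) *
          ∑ i, (((∑ j, (Q i j : ℕ) : ℕ) : ℝ) - (S : ℝ) / m) ^ 2)) /
      ((univ.filter (fun Q : Matrix (Fin m) (Fin n) (Fin (S + 1)) =>
          ∑ i, ∑ j, (Q i j : ℕ) = S)).card : ℝ)
    = (n : ℝ) * ((m : ℝ) - 1) / ((m : ℝ) * n + 1) := by
  classical
  by_cases hm1 : m = 1
  · subst hm1
    have hz : ∀ Q ∈ univ.filter (fun Q : Matrix (Fin 1) (Fin n) (Fin (S + 1)) =>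
          ∑ i, ∑ j, (Q i j : ℕ) = S),
        ((1 : ℕ) : ℝ) * n / ((S : ℝ) * (((1:ℕ) : ℝ) * n + S)) *
          ∑ i, (((∑ j, (Q i j : ℕ) : ℕ) : ℝ) - (S : ℝ) / ((1:ℕ):ℝ)) ^ 2 = 0 := by
      intro Q hQ
      rw [mem_filter] at hQ
      have h1 : ∑ j, (Q 0 j : ℕ) = S := by
        have := hQ.2
        rwa [Fin.sum_univ_one] at this
      have h2 : ∑ i : Fin 1, (((∑ j, (Q i j : ℕ) : ℕ) : ℝ) - (S : ℝ) / ((1:ℕ):ℝ)) ^ 2 = 0 := by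
        rw [Fin.sum_univ_one, h1]
        norm_num
      rw [h2, mul_zero]
    rw [Finset.sum_congr rfl hz, Finset.sum_const, smul_zero, zero_div]
    norm_num
  · -- main case
    have hm2 : 2 ≤ m := by omega
    have hT2 : 2 ≤ m * n := le_trans (by omega) (Nat.mul_le_mul hm2 hn)
    have hcardι : Fintype.card (Fin m × Fin n) = m * n := by simp
    have h2 : 2 ≤ Fintype.card (Fin m × Fin n) := by rw [hcardι]; exact hT2
    have hχ1 := aux18_chi1 (m*n) S (by omega) hS
    have hχ2 := aux18_chi2 (m*n) S (by omega) hS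
    have hSle : S ≤ S + m*n - 1 := by omega
    set c0 : Fin m × Fin n := (⟨0, by omega⟩, ⟨0, by omega⟩) with hc0
    set c0' : Fin m × Fin n := (⟨1, by omega⟩, ⟨0, by omega⟩) with hc0'
    have hne : c0 ≠ c0' := by
      simp [hc0, hc0', Prod.ext_iff, Fin.ext_iff]
    set P := piAntidiag (univ : Finset (Fin m × Fin n)) S with hPdef
    set N := P.card with hNdef
    set A := ∑ f ∈ P, (f c0)^2 with hAdef
    set B := ∑ f ∈ P, f c0 * f c0' with hBdef
    set K1 := (S + m*n - 1).choose (m*n) with hK1def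
    set K2 := (S + m*n - 1).choose (m*n + 1) with hK2def
    -- counting facts
    have hN : N = (S + m*n - 1).choose S := by
      rw [hNdef, hPdef, aux18_card, card_univ, hcardι]
    have hA : A = 2 * K2 + K1 := by
      rw [hAdef, hPdef, aux18_sq c0 S h2, hcardι]
    have htot : S^2 * N = m*n*(A + (m*n - 1) * B) := by
      rw [hNdef, hAdef, hBdef, hPdef]
      have := aux18_all_pairs S hne h2
      rwa [hcardι] at this
    have hrows : (∑ f ∈ P, ∑ i, (∑ j, f (i,j))^2) = m*n*(A + (n-1)*B) :=
      aux18_rows m n S hne h2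
    have hN0 : 0 < N := by
      rw [hN]
      exact Nat.choose_pos hSle
    -- transport to P
    have hcardM : (univ.filter (fun Q : Matrix (Fin m) (Fin n) (Fin (S + 1)) =>
          ∑ i, ∑ j, (Q i j : ℕ) = S)).card = N := by
      rw [hNdef, hPdef]
      refine Finset.card_bij' (fun Q _ => (fun c : Fin m × Fin n => (Q c.1 c.2 : ℕ)))
        (fun f hf => (fun i j => (⟨f (i,j), Nat.lt_succ_of_le (by
          have h1 := (mem_piAntidiag.mp hf).1
          calc f (i,j) ≤ ∑ c : Fin m × Fin n, f c :=
                Finset.single_le_sum (fun c _ => Nat.zero_le _) (mem_univ (i,j))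
            _ = S := h1)⟩ : Fin (S+1)))) ?_ ?_ ?_ ?_
      · intro Q hQ
        refine mem_piAntidiag.mpr ⟨?_, fun c _ => mem_univ c⟩
        rw [Fintype.sum_prod_type]
        exact (mem_filter.mp hQ).2
      · intro f hf
        refine mem_filter.mpr ⟨mem_univ _, ?_⟩
        have h1 := (mem_piAntidiag.mp hf).1
        show ∑ i, ∑ j, f (i, j) = S
        rw [← Fintype.sum_prod_type]
        exact h1
      · intro Q hQ
        funext i j
        rfl
      · intro f hf
        funext c
        rfl
    have htrans : (∑ Q ∈ univ.filter (fun Q : Matrix (Fin m) (Fin n) (Fin (S + 1)) =>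
          ∑ i, ∑ j, (Q i j : ℕ) = S),
        ((m : ℝ) * n / ((S : ℝ) * ((m : ℝ) * n + S)) *
          ∑ i, (((∑ j, (Q i j : ℕ) : ℕ) : ℝ) - (S : ℝ) / m) ^ 2))
        = ∑ f ∈ P, ((m : ℝ) * n / ((S : ℝ) * ((m : ℝ) * n + S)) *
          ∑ i, (((∑ j, f (i,j) : ℕ) : ℝ) - (S : ℝ) / m) ^ 2) := by
      rw [hPdef]
      refine Finset.sum_bij' (fun Q _ => (fun c : Fin m × Fin n => (Q c.1 c.2 : ℕ)))
        (fun f hf => (fun i j => (⟨f (i,j), Nat.lt_succ_of_le (by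
          have h1 := (mem_piAntidiag.mp hf).1
          calc f (i,j) ≤ ∑ c : Fin m × Fin n, f c :=
                Finset.single_le_sum (fun c _ => Nat.zero_le _) (mem_univ (i,j))
            _ = S := h1)⟩ : Fin (S+1)))) ?_ ?_ ?_ ?_ ?_
      · intro Q hQ
        refine mem_piAntidiag.mpr ⟨?_, fun c _ => mem_univ c⟩
        rw [Fintype.sum_prod_type]
        exact (mem_filter.mp hQ).2
      · intro f hf
        refine mem_filter.mpr ⟨mem_univ _, ?_⟩
        have h1 := (mem_piAntidiag.mp hf).1
        show ∑ i, ∑ j, f (i, j) = S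
        rw [← Fintype.sum_prod_type]
        exact h1
      · intro Q hQ
        funext i j
        rfl
      · intro f hf
        funext c
        rfl
      · intro Q hQ
        rfl
    rw [htrans, hcardM]
    -- per-f evaluation
    have hm0 : (m:ℝ) ≠ 0 := Nat.cast_ne_zero.mpr hm.ne' 
    have hterm : ∀ f ∈ P, ((m : ℝ) * n / ((S : ℝ) * ((m : ℝ) * n + S)) *
          ∑ i, (((∑ j, f (i,j) : ℕ) : ℝ) - (S : ℝ) / m) ^ 2)
        = ((m : ℝ) * n / ((S : ℝ) * ((m : ℝ) * n + S))) *
          ((∑ i, (((∑ j, f (i,j) : ℕ) : ℝ))^2) - (S:ℝ)^2/m) := by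
      intro f hf
      congr 1
      have hsum : ∑ i, (((∑ j, f (i,j) : ℕ)):ℝ) = (S:ℝ) := by
        have h1 := (mem_piAntidiag.mp hf).1
        rw [Fintype.sum_prod_type] at h1
        rw [← h1]
        push_cast
        rfl
      calc ∑ i, (((∑ j, f (i,j) : ℕ):ℝ) - (S:ℝ)/m)^2
          = ∑ i, ((((∑ j, f (i,j) : ℕ):ℝ))^2 - 2*((S:ℝ)/m)*(((∑ j, f (i,j) : ℕ):ℝ))
              + ((S:ℝ)/m)^2) := sum_congr rfl fun i _ => by ring
        _ = (∑ i, (((∑ j, f (i,j) : ℕ):ℝ))^2) - 2*((S:ℝ)/m)*(S:ℝ) + m*((S:ℝ)/m)^2 := by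
            rw [sum_add_distrib, sum_sub_distrib, ← mul_sum, hsum, sum_const, card_univ,
              Fintype.card_fin, nsmul_eq_mul]
        _ = (∑ i, (((∑ j, f (i,j) : ℕ):ℝ))^2) - (S:ℝ)^2/m := by
            field_simp
            ring
    rw [Finset.sum_congr rfl hterm, ← mul_sum, sum_sub_distrib, sum_const, ← hNdef, nsmul_eq_mul]
    have hcast : ∑ f ∈ P, ∑ i, ((((∑ j, f (i,j) : ℕ)):ℝ))^2
        = ((∑ f ∈ P, ∑ i, (∑ j, f (i,j))^2 : ℕ) : ℝ) := by
      push_cast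
      rfl
    rw [hcast, hrows]
    -- real arithmetic endgame
    have hn0 : (n:ℝ) ≠ 0 := Nat.cast_ne_zero.mpr hn.ne' 
    have hS0 : (S:ℝ) ≠ 0 := Nat.cast_ne_zero.mpr hS.ne' 
    have hmn2 : (2:ℝ) ≤ (m:ℝ)*(n:ℝ) := by exact_mod_cast hT2
    have hmn0 : (m:ℝ)*(n:ℝ) ≠ 0 := by positivity
    have hmn1 : (m:ℝ)*(n:ℝ) - 1 ≠ 0 := by
      have h1 : (0:ℝ) < (m:ℝ)*(n:ℝ) - 1 := by linarith
      exact ne_of_gt h1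
    have hmnp1 : (m:ℝ)*(n:ℝ) + 1 ≠ 0 := by positivity
    have hmnS : (m:ℝ)*(n:ℝ) + (S:ℝ) ≠ 0 := by positivity
    have hNr0 : (N:ℝ) ≠ 0 := Nat.cast_ne_zero.mpr hN0.ne' 
    -- cast identities
    have r1 : (N:ℝ) * S = (K1:ℝ) * ((m:ℝ)*n) := by
      have : ((N * S : ℕ) : ℝ) = ((K1 * (m*n) : ℕ) : ℝ) := by
        rw [hN]; exact_mod_cast congrArg (Nat.cast (R := ℝ)) hχ1
      push_cast at this
      linarith [this]
    have r2 : (K1:ℝ) * ((S:ℝ) - 1) = (K2:ℝ) * ((m:ℝ)*n + 1) := by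
      have h := congrArg (Nat.cast (R := ℝ)) hχ2
      push_cast [Nat.cast_sub hS] at h
      linarith [h]
    have r3 : (A:ℝ) = 2*(K2:ℝ) + (K1:ℝ) := by exact_mod_cast congrArg (Nat.cast (R := ℝ)) hA
    have r4 : (S:ℝ)^2 * (N:ℝ) = (m:ℝ)*n*((A:ℝ) + ((m:ℝ)*n - 1)*(B:ℝ)) := by
      have h := congrArg (Nat.cast (R := ℝ)) htot
      push_cast [Nat.cast_sub (le_trans one_le_two hT2)] at h
      linarith [h]
    -- m*n*(A + (n-1)*B) cast
    have r5 : ((m*n*(A + (n-1)*B) : ℕ) : ℝ) = (m:ℝ)*n*((A:ℝ) + ((n:ℝ) - 1)*(B:ℝ)) := by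
      push_cast [Nat.cast_sub hn]
      ring
    rw [r5]
    exact aux18_final (m:ℝ) (n:ℝ) (S:ℝ) (A:ℝ) (B:ℝ) (N:ℝ) (K1:ℝ) (K2:ℝ)
      hm0 hn0 hS0 hmn1 hmnp1 hmnS hNr0 r1 r2 r3 r4
end
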